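/- arXiv:1607.02031 — 7 statements merged into one kernel-verified Lean document; each statement's English description precedes it below -/
import Mathlib

section
/- Assume ℓ : W̃ → ℤ is strictly monotone. Fix n ∈ ℤ and w₀ ∈ W̃ with ℓ(w₀) = n. Then, as submodules of M, Fil^{w₀} M ∩ Σ_{w : ℓ(w) ≤ n, w ≠ w₀} Fil^w M = Σ_{w : w < w₀} Fil^w M. -/
variable {R M Wt : Type*} [Ring R] [AddCommGroup M] [Module R M] [PartialOrder Wt]

/-- `Fil^w M := Fil({w' ∈ W̃ : w' ≤ w})`. -/
def filAt (Fil : LowerSet Wt → Submodule R M) (w : Wt) : Submodule R M :=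
  Fil (LowerSet.Iic w)

/-- Let `R` be a ring, `M` an `R`-module, `(W̃, ≤)` a poset, and `Fil` a filtration of `M`
indexed by `W̃`, i.e. a map from lower sets of `W̃` to `R`-submodules of `M` which is a
morphism of complete lattices.  Assume `ℓ : W̃ → ℤ` is strictly monotone.  Fix `n ∈ ℤ` and
`w₀ ∈ W̃` with `ℓ(w₀) = n`.  Then, as submodules of `M`,
`Fil^{w₀} M ∩ Σ_{ℓ(w) ≤ n, w ≠ w₀} Fil^w M = Σ_{w < w₀} Fil^w M`. -/
theorem stmt_2 (Fil : LowerSet Wt → Submodule R M)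
    (hinf : ∀ 𝒮 : Set (LowerSet Wt), Fil (sInf 𝒮) = ⨅ T ∈ 𝒮, Fil T)
    (hsup : ∀ 𝒮 : Set (LowerSet Wt), Fil (sSup 𝒮) = ⨆ T ∈ 𝒮, Fil T)
    (ℓ : Wt → ℤ) (hℓ : StrictMono ℓ) (n : ℤ) (w₀ : Wt) (hw₀ : ℓ w₀ = n) :
    filAt Fil w₀ ⊓ (⨆ w ∈ {w : Wt | ℓ w ≤ n ∧ w ≠ w₀}, filAt Fil w) =
      ⨆ w ∈ {w : Wt | w < w₀}, filAt Fil w := by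
  have hbin : ∀ T₁ T₂ : LowerSet Wt, Fil (T₁ ⊓ T₂) = Fil T₁ ⊓ Fil T₂ := by
    intro T₁ T₂
    have := hinf {T₁, T₂}
    rw [sInf_pair, iInf_pair] at this
    exact this
  have hFsup : ∀ s : Set Wt, Fil (sSup (LowerSet.Iic '' s)) = ⨆ w ∈ s, filAt Fil w := by
    intro s
    rw [hsup, iSup_image]
    rfl
  have key : (LowerSet.Iic w₀ ⊓ sSup (LowerSet.Iic '' {w : Wt | ℓ w ≤ n ∧ w ≠ w₀}))
      = sSup (LowerSet.Iic '' {w : Wt | w < w₀}) := by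
    apply SetLike.ext
    intro x
    simp only [LowerSet.mem_inf_iff, LowerSet.mem_Iic_iff, SetLike.mem_coe]
    constructor
    · rintro ⟨hx0, hx⟩
      simp only [LowerSet.mem_sSup_iff, Set.mem_image, Set.mem_setOf_eq] at hx ⊢
      obtain ⟨T, ⟨w, ⟨hwn, hwne⟩, rfl⟩, hxT⟩ := hx
      have hxw : x ≤ w := hxT
      have hx0' : x < w₀ := by
        rcases lt_or_eq_of_le hx0 with h | h
        · exact h
        · exfalso
          subst h
          rcases lt_or_eq_of_le hxw with h2 | h2
          · have := hℓ h2
            omega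
          · exact hwne h2.symm
      exact ⟨LowerSet.Iic x, ⟨x, hx0', rfl⟩, le_refl x⟩
    · rintro hx
      simp only [LowerSet.mem_sSup_iff, Set.mem_image, Set.mem_setOf_eq] at hx ⊢
      obtain ⟨T, ⟨w, hww0, rfl⟩, hxT⟩ := hx
      have hxw : x ≤ w := hxT
      refine ⟨hxw.trans hww0.le, LowerSet.Iic w, ⟨w, ⟨?_, ne_of_lt hww0⟩, rfl⟩, hxw⟩
      have := hℓ hww0
      omega
  calc filAt Fil w₀ ⊓ (⨆ w ∈ {w : Wt | ℓ w ≤ n ∧ w ≠ w₀}, filAt Fil w)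
      = Fil (LowerSet.Iic w₀ ⊓ sSup (LowerSet.Iic '' {w : Wt | ℓ w ≤ n ∧ w ≠ w₀})) := by
        rw [hbin, hFsup]; rfl
    _ = ⨆ w ∈ {w : Wt | w < w₀}, filAt Fil w := by rw [key, hFsup]
end

section
/- Let R be a ring, M an R-module, (W̃, ≤) a finite partially ordered set, and F a map from lower sets of W̃ to R-submodules of M. Then F is a morphism of complete lattices (i.e. F(⋂_i W_i) = ⋂_i F(W_i) and F(⋃_i W_i) = Σ_i F(W_i) for every family (W_i) of lower sets) if and only if the following hold: F is inclusion-preserving, F(∅) = 0, F(W̃) = M, and for every pair of lower sets W₁, W₂ ⊆ W̃ the sequence of R-modules 0 → F(W₁ ∩ W₂) → F(W₁) ⊕ F(W₂) → F(W₁ ∪ W₂) → 0, with maps v ↦ (v, −v) and (v₁, v₂) ↦ v₁ + v₂, is exact. -/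
/-!
In a finite complete lattice every infimum is a finite one, so a map preserves all infima as soon
as it preserves `⊤` and binary infima, and dually for suprema. For submodules `C ≤ A, B ≤ D`, the
sequence `0 → C → A × B → D → 0` is automatically left exact; exactness in the middle says
`A ⊓ B ≤ C`, and surjectivity says `D ≤ A ⊔ B`. With `C = F (W₁ ⊓ W₂)` and `D = F (W₁ ⊔ W₂)`
these are the two nontrivial inequalities of `F (W₁ ⊓ W₂) = F W₁ ⊓ F W₂` and
`F (W₁ ⊔ W₂) = F W₁ ⊔ F W₂`.
-/

theorem map_sInf_eq_iInf_iff_of_finite {α β : Type*} [CompleteLattice α] [CompleteLattice β]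
    [Finite α] {f : α → β} :
    (∀ s : Set α, f (sInf s) = ⨅ a ∈ s, f a) ↔ f ⊤ = ⊤ ∧ ∀ a b, f (a ⊓ b) = f a ⊓ f b := by
  refine ⟨fun h => ⟨by simpa using h ∅, fun a b => by rw [← sInf_pair, h, iInf_pair]⟩, ?_⟩
  rintro ⟨htop, hinf⟩ s
  induction s, s.toFinite using Set.Finite.induction_on with
  | empty => simpa using htop
  | insert _ _ ih => rw [sInf_insert, hinf, ih, iInf_insert]

theorem map_sSup_eq_iSup_iff_of_finite {α β : Type*} [CompleteLattice α] [CompleteLattice β]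
    [Finite α] {f : α → β} :
    (∀ s : Set α, f (sSup s) = ⨆ a ∈ s, f a) ↔ f ⊥ = ⊥ ∧ ∀ a b, f (a ⊔ b) = f a ⊔ f b :=
  map_sInf_eq_iInf_iff_of_finite (α := αᵒᵈ) (β := βᵒᵈ)
    (f := OrderDual.toDual ∘ f ∘ OrderDual.ofDual)

namespace Submodule

variable {R M : Type*} [Ring R] [AddCommGroup M] [Module R M] {A B C D : Submodule R M}

theorem injective_prod_inclusion_neg_inclusion (hCA : C ≤ A) (hCB : C ≤ B) :
    Function.Injective (LinearMap.prod (inclusion hCA) (-inclusion hCB)) :=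
  fun _ _ h => inclusion_injective hCA (congrArg Prod.fst h)

theorem exact_prod_inclusion_neg_inclusion_iff (hCA : C ≤ A) (hCB : C ≤ B) (hAD : A ≤ D)
    (hBD : B ≤ D) :
    Function.Exact (LinearMap.prod (inclusion hCA) (-inclusion hCB))
        ((inclusion hAD).comp (LinearMap.fst R A B) + (inclusion hBD).comp (LinearMap.snd R A B)) ↔
      A ⊓ B ≤ C := by
  constructor
  · intro hexact x hx
    obtain ⟨v, hv⟩ := (hexact (⟨x, hx.1⟩, ⟨-x, neg_mem hx.2⟩)).1 (Subtype.ext (add_neg_cancel x))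
    have hvx : (v : M) = x := congrArg (fun p => (p.1 : M)) hv
    exact hvx ▸ v.2
  · intro hle p
    constructor
    · intro hsum
      have hp : (p.1 : M) = -p.2 := eq_neg_of_add_eq_zero_left (congrArg Subtype.val hsum)
      refine ⟨⟨p.1, hle ⟨p.1.2, hp ▸ neg_mem p.2.2⟩⟩, ?_⟩
      ext <;> simp [hp]
    · rintro ⟨v, rfl⟩
      exact Subtype.ext (add_neg_cancel (v : M))

theorem surjective_inclusion_fst_add_inclusion_snd_iff (hAD : A ≤ D) (hBD : B ≤ D) :
    Function.Surjective
        ((inclusion hAD).comp (LinearMap.fst R A B) + (inclusion hBD).comp (LinearMap.snd R A B)) ↔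
      D ≤ A ⊔ B := by
  constructor
  · rintro hsurj z hz
    obtain ⟨⟨x, y⟩, hxy⟩ := hsurj ⟨z, hz⟩
    exact mem_sup.2 ⟨x, x.2, y, y.2, congrArg Subtype.val hxy⟩
  · rintro hle ⟨z, hz⟩
    obtain ⟨x, hx, y, hy, rfl⟩ := mem_sup.1 (hle hz)
    exact ⟨(⟨x, hx⟩, ⟨y, hy⟩), rfl⟩

end Submodule

/-- Let `R` be a ring, `M` an `R`-module, `(W̃, ≤)` a finite poset, and `F` a map from lower
sets of `W̃` to `R`-submodules of `M`.  Then `F` is a morphism of complete lattices (i.e.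
`F(⋂ᵢ Wᵢ) = ⋂ᵢ F(Wᵢ)` and `F(⋃ᵢ Wᵢ) = Σᵢ F(Wᵢ)` for every family of lower sets) if and only
if: `F` is inclusion-preserving, `F(∅) = 0`, `F(W̃) = M`, and for every pair of lower sets
`W₁, W₂` the sequence `0 → F(W₁ ∩ W₂) → F(W₁) ⊕ F(W₂) → F(W₁ ∪ W₂) → 0`, with maps
`v ↦ (v, −v)` and `(v₁, v₂) ↦ v₁ + v₂`, is exact. -/
theorem stmt_4 {R M Wt : Type*} [Ring R] [AddCommGroup M] [Module R M] [PartialOrder Wt]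
    [Finite Wt] (F : LowerSet Wt → Submodule R M) :
    ((∀ 𝒮 : Set (LowerSet Wt), F (sInf 𝒮) = ⨅ T ∈ 𝒮, F T) ∧
      (∀ 𝒮 : Set (LowerSet Wt), F (sSup 𝒮) = ⨆ T ∈ 𝒮, F T)) ↔
    ∃ hmono : Monotone F, F ⊥ = ⊥ ∧ F ⊤ = ⊤ ∧
      ∀ W₁ W₂ : LowerSet Wt,
        Function.Injective
          (LinearMap.prod (Submodule.inclusion (hmono (inf_le_left (b := W₂))))
            (-Submodule.inclusion (hmono (inf_le_right (a := W₁)))) :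
            ↥(F (W₁ ⊓ W₂)) →ₗ[R] ↥(F W₁) × ↥(F W₂)) ∧
        Function.Exact
          (LinearMap.prod (Submodule.inclusion (hmono (inf_le_left (b := W₂))))
            (-Submodule.inclusion (hmono (inf_le_right (a := W₁)))) :
            ↥(F (W₁ ⊓ W₂)) →ₗ[R] ↥(F W₁) × ↥(F W₂))
          ((Submodule.inclusion (hmono (le_sup_left (b := W₂)))).comp
              (LinearMap.fst R ↥(F W₁) ↥(F W₂)) +
            (Submodule.inclusion (hmono (le_sup_right (a := W₁)))).comp
              (LinearMap.snd R ↥(F W₁) ↥(F W₂)) :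
            ↥(F W₁) × ↥(F W₂) →ₗ[R] ↥(F (W₁ ⊔ W₂))) ∧
        Function.Surjective
          ((Submodule.inclusion (hmono (le_sup_left (b := W₂)))).comp
              (LinearMap.fst R ↥(F W₁) ↥(F W₂)) +
            (Submodule.inclusion (hmono (le_sup_right (a := W₁)))).comp
              (LinearMap.snd R ↥(F W₁) ↥(F W₂)) :
            ↥(F W₁) × ↥(F W₂) →ₗ[R] ↥(F (W₁ ⊔ W₂))) := by
  rw [map_sInf_eq_iInf_iff_of_finite, map_sSup_eq_iSup_iff_of_finite]
  constructor
  · rintro ⟨⟨htop, hinf⟩, hbot, hsup⟩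
    exact ⟨Monotone.of_map_sup hsup, hbot, htop, fun W₁ W₂ =>
      ⟨Submodule.injective_prod_inclusion_neg_inclusion _ _,
        (Submodule.exact_prod_inclusion_neg_inclusion_iff _ _ _ _).2 (hinf W₁ W₂).ge,
        (Submodule.surjective_inclusion_fst_add_inclusion_snd_iff _ _).2 (hsup W₁ W₂).le⟩⟩
  · rintro ⟨hmono, hbot, htop, hexact⟩
    refine ⟨⟨htop, fun W₁ W₂ => le_antisymm (hmono.map_inf_le W₁ W₂) ?_⟩, hbot,
      fun W₁ W₂ => le_antisymm ?_ (hmono.le_map_sup W₁ W₂)⟩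
    · exact (Submodule.exact_prod_inclusion_neg_inclusion_iff _ _ _ _).1 (hexact W₁ W₂).2.1
    · exact (Submodule.surjective_inclusion_fst_add_inclusion_snd_iff _ _).1 (hexact W₁ W₂).2.2
end

section
/- Let I, J ⊆ Δ and let w ∈ W be such that w^{-1}(α) ∈ Φ^+ for every α ∈ I and w(β) ∈ Φ^+ for every β ∈ J. Then Φ_I ∩ w(J) = I ∩ w(J), i.e. every root of w(J) that lies in the ℤ-span of I is in fact a simple root belonging to I. -/
/-- Let `Φ` be a finite root system in a real vector space `V` with base `Δ` (a linearly
independent set such that every root is a `ℤ`-linear combination of elements of `Δ` with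
coefficients all `≥ 0` or all `≤ 0`), and let `Pos = Φ⁺` be the corresponding positive
roots.  Let `I, J ⊆ Δ` and let `w` (an element of the Weyl group, i.e. a linear
automorphism of `V` permuting `Φ`) be such that `w⁻¹(α) ∈ Φ⁺` for every `α ∈ I` and
`w(β) ∈ Φ⁺` for every `β ∈ J`.  Then `Φ_I ∩ w(J) = I ∩ w(J)`, where
`Φ_I := Φ ∩ span_ℤ(I)`. -/
theorem stmt_5 {V : Type*} [AddCommGroup V] [Module ℝ V]
    (Φ : Set V) (hΦfin : Φ.Finite) (hΦ0 : (0 : V) ∉ Φ)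
    (Δ : Set V) (hΔΦ : Δ ⊆ Φ)
    (hΔindep : LinearIndependent ℝ (fun a : Δ => (a : V)))
    (Pos : Set V)
    (hPos : Pos = {α ∈ Φ | ∃ c : Δ →₀ ℕ, α = c.sum fun β m => m • (β : V)})
    (hsign : ∀ α ∈ Φ, (∃ c : Δ →₀ ℕ, α = c.sum fun β m => m • (β : V)) ∨
        (∃ c : Δ →₀ ℕ, α = -(c.sum fun β m => m • (β : V))))
    (w : V ≃ₗ[ℝ] V) (hw : ∀ v : V, v ∈ Φ ↔ w v ∈ Φ)
    (I J : Set V) (hI : I ⊆ Δ) (hJ : J ⊆ Δ)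
    (hwI : ∀ α ∈ I, w.symm α ∈ Pos) (hwJ : ∀ β ∈ J, w β ∈ Pos) :
    (Φ ∩ (Submodule.span ℤ I : Set V)) ∩ (⇑w '' J) = I ∩ (⇑w '' J) := by
  classical
  set T : (Δ →₀ ℝ) →ₗ[ℝ] V := Finsupp.linearCombination ℝ (fun a : Δ => (a : V)) with hT
  have hTinj : Function.Injective T := by
    intro a b hab
    have h0 := linearIndependent_iff.mp hΔindep (a - b)
      (by rw [map_sub, hab, sub_self])
    exact sub_eq_zero.mp h0
  set C : (Δ →₀ ℕ) →+ (Δ →₀ ℝ) :=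
    Finsupp.mapRange.addMonoidHom (Nat.castAddMonoidHom ℝ) with hC
  have hCapp : ∀ c : Δ →₀ ℕ, C c = c.mapRange (Nat.cast : ℕ → ℝ) Nat.cast_zero := fun _ => rfl
  have hCinj : Function.Injective C := by
    intro a b hab
    rw [hCapp, hCapp] at hab
    exact Finsupp.mapRange_injective _ Nat.cast_zero Nat.cast_injective hab
  have hTC : ∀ c : Δ →₀ ℕ, c.sum (fun β m => m • (β : V)) = T (C c) := by
    intro c
    rw [hCapp, hT, Finsupp.linearCombination_apply,
      Finsupp.sum_mapRange_index (by simp)]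
    exact Finsupp.sum_congr fun a _ => (Nat.cast_smul_eq_nsmul ℝ _ _).symm
  ext x
  simp only [Set.mem_inter_iff, SetLike.mem_coe]
  constructor
  · rintro ⟨⟨hxΦ, hxspan⟩, hxw⟩
    refine ⟨?_, hxw⟩
    obtain ⟨β, hβJ, hβx⟩ := hxw
    -- expansion of x as nonneg combination of simple roots
    obtain ⟨c, hc⟩ : ∃ c : Δ →₀ ℕ, x = c.sum fun β m => m • (β : V) := by
      have hx : w β ∈ Pos := hwJ β hβJ
      rw [hPos] at hx
      rw [← hβx]
      exact hx.2
    -- support of c lies in I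
    have hsuppI : ∀ δ ∈ c.support, (δ : V) ∈ I := by
      have himg : (fun a : Δ => (a : V)) '' {a : Δ | (a : V) ∈ I} = I := by
        ext v
        constructor
        · rintro ⟨a, ha, rfl⟩; exact ha
        · intro hv; exact ⟨⟨v, hI hv⟩, hv, rfl⟩
      have hxspanR : x ∈ Submodule.span ℝ
          ((fun a : Δ => (a : V)) '' {a : Δ | (a : V) ∈ I}) := by
        rw [himg]
        exact Submodule.span_subset_span ℤ ℝ I hxspan
      obtain ⟨l, hlsupp, hlx⟩ :=
        (Finsupp.mem_span_image_iff_linearCombination ℝ).mp hxspanR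
      have hCl : C c = l := hTinj (by rw [← hTC, ← hc]; exact hlx.symm)
      intro δ hδ
      have hδ' : δ ∈ (C c).support := by
        rw [hCapp, Finsupp.support_mapRange_of_injective Nat.cast_zero _ Nat.cast_injective]
        exact hδ
      rw [hCl] at hδ'
      exact (Finsupp.mem_supported ℝ l).mp hlsupp hδ'
    -- x ≠ 0, so c has nonempty support
    have hsuppne : c.support.Nonempty := by
      rcases c.support.eq_empty_or_nonempty with h | h
      · exfalso
        have : c = 0 := Finsupp.support_eq_empty.mp h
        rw [this, Finsupp.sum_zero_index] at hc
        exact hΦ0 (hc ▸ hxΦ)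
      · exact h
    -- expansions of w.symm δ for δ in the support
    have he : ∀ δ : Δ, ∃ f : Δ →₀ ℕ,
        δ ∈ c.support → w.symm (δ : V) = f.sum fun β m => m • (β : V) := by
      intro δ
      by_cases hδ : δ ∈ c.support
      · have hp := hwI _ (hsuppI δ hδ)
        rw [hPos] at hp
        exact ⟨hp.2.choose, fun _ => hp.2.choose_spec⟩
      · exact ⟨0, fun h => absurd h hδ⟩
    choose e he using he
    set b : Δ := ⟨β, hJ hβJ⟩ with hb
    set F : Δ →₀ ℕ := ∑ δ ∈ c.support, c δ • e δ with hF
    -- β = T (C F)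
    have hβsymm : β = w.symm x := by rw [← hβx, LinearEquiv.symm_apply_apply]
    have key : (b : V) = T (C F) := by
      have h1 : T (C F) = ∑ δ ∈ c.support, (c δ : ℕ) • T (C (e δ)) := by
        rw [hF, map_sum, map_sum]
        refine Finset.sum_congr rfl fun δ _ => ?_
        rw [map_nsmul, map_nsmul]
      have h2 : (b : V) = ∑ δ ∈ c.support, (c δ : ℕ) • w.symm (δ : V) := by
        show β = _
        rw [hβsymm, hc, Finsupp.sum, map_sum]
        refine Finset.sum_congr rfl fun δ _ => ?_
        rw [map_nsmul]
      rw [h1, h2]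
      refine Finset.sum_congr rfl fun δ hδ => ?_
      rw [he δ hδ, hTC]
    have hsingle : (b : V) = T (C (Finsupp.single b 1)) := by
      rw [hCapp, Finsupp.mapRange_single, hT]
      simp
    have hFeq : F = Finsupp.single b 1 := hCinj (hTinj (by rw [← key, ← hsingle]))
    -- height homomorphism
    set H : (Δ →₀ ℕ) →+ ℕ := Finsupp.liftAddHom (fun _ : Δ => AddMonoidHom.id ℕ) with hH
    have hHapp : ∀ f : Δ →₀ ℕ, H f = f.sum fun _ m => m := by
      intro f; rw [hH, Finsupp.liftAddHom_apply]; rfl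
    have hsum1 : ∑ δ ∈ c.support, c δ * H (e δ) = 1 := by
      have : H F = 1 := by
        rw [hFeq, hH, Finsupp.liftAddHom_apply_single]; rfl
      rw [← this, hF, map_sum]
      refine Finset.sum_congr rfl fun δ _ => ?_
      rw [map_nsmul, smul_eq_mul]
    have hterm : ∀ δ ∈ c.support, 1 ≤ c δ * H (e δ) := by
      intro δ hδ
      have hc1 : 1 ≤ c δ := Nat.one_le_iff_ne_zero.mpr (Finsupp.mem_support_iff.mp hδ)
      have hene : e δ ≠ 0 := by
        intro h0
        have hz : w.symm (δ : V) = 0 := by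
          rw [he δ hδ, h0, Finsupp.sum_zero_index]
        have hmem : w.symm (δ : V) ∈ Φ := by
          rw [hw]
          simpa using hΔΦ δ.2
        rw [hz] at hmem
        exact hΦ0 hmem
      have hHe : 1 ≤ H (e δ) := by
        rcases Nat.eq_zero_or_pos (H (e δ)) with h | h
        · exfalso
          apply hene
          rw [hHapp, Finsupp.sum] at h
          ext γ
          by_cases hγ : γ ∈ (e δ).support
          · exact (Finset.sum_eq_zero_iff.mp h) γ hγ
          · simpa using Finsupp.notMem_support_iff.mp hγ
        · exact h
      calc 1 = 1 * 1 := (one_mul 1).symm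
        _ ≤ c δ * H (e δ) := Nat.mul_le_mul hc1 hHe
    -- support is a singleton
    have hcard : c.support.card = 1 := by
      have h1 : c.support.card ≤ 1 := by
        calc c.support.card = ∑ _δ ∈ c.support, 1 := by
              rw [Finset.sum_const, smul_eq_mul, mul_one]
          _ ≤ ∑ δ ∈ c.support, c δ * H (e δ) := Finset.sum_le_sum hterm
          _ = 1 := hsum1
      have h2 : 1 ≤ c.support.card := Finset.card_pos.mpr hsuppne
      omega
    obtain ⟨δ0, hδ0⟩ := Finset.card_eq_one.mp hcard
    have hδ0mem : δ0 ∈ c.support := by rw [hδ0]; exact Finset.mem_singleton_self δ0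
    have hcδ0 : c δ0 = 1 := by
      rw [hδ0, Finset.sum_singleton] at hsum1
      exact (Nat.eq_one_of_mul_eq_one_right hsum1)
    have hxδ0 : x = (δ0 : V) := by
      rw [hc, Finsupp.sum, hδ0, Finset.sum_singleton, hcδ0, one_smul]
    rw [hxδ0]
    exact hsuppI δ0 hδ0mem
  · rintro ⟨hxI, hxw⟩
    exact ⟨⟨hΔΦ (hI hxI), Submodule.subset_span hxI⟩, hxw⟩
end

section
/- Let I, J ⊆ Δ and let w ∈ W be such that w^{-1}(α) ∈ Φ^+ for every α ∈ I and w(β) ∈ Φ^+ for every β ∈ J. Then Φ_I ∩ w(Φ_J^+) = Φ_{I ∩ w(J)}^+, where I ∩ w(J) ⊆ Δ and Φ_{I ∩ w(J)}^+ denotes the positive roots lying in the ℤ-span of I ∩ w(J). -/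
set_option linter.unusedSectionVars false

section aux
variable {V : Type*} [AddCommGroup V] [Module ℝ V] {Δ : Set V}

noncomputable def rootF (Δ : Set V) : (↥Δ →₀ ℕ) →+ V :=
  Finsupp.liftAddHom fun β => (smulAddHom ℕ V).flip (β : V)

lemma rootF_apply (c : ↥Δ →₀ ℕ) : rootF Δ c = c.sum fun β m => m • (β : V) := by
  rw [rootF, Finsupp.liftAddHom_apply]; rfl

noncomputable def htF (Δ : Set V) : (↥Δ →₀ ℕ) →+ ℕ :=
  Finsupp.liftAddHom fun _ => AddMonoidHom.id ℕ

lemma htF_apply (c : ↥Δ →₀ ℕ) : htF Δ c = c.sum fun _ m => m := by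
  rw [htF, Finsupp.liftAddHom_apply]; rfl

lemma rootF_eq_lc (c : ↥Δ →₀ ℕ) :
    rootF Δ c = Finsupp.linearCombination ℝ (fun a : Δ => (a : V))
      (c.mapRange (Nat.cast) Nat.cast_zero) := by
  rw [rootF_apply, Finsupp.linearCombination_apply, Finsupp.sum_mapRange_index (by simp)]
  simp [Nat.cast_smul_eq_nsmul]

lemma lc_inj (hΔindep : LinearIndependent ℝ (fun a : Δ => (a : V))) :
    Function.Injective (Finsupp.linearCombination ℝ (fun a : Δ => (a : V))) := by
  intro a b h
  have := linearIndependent_iff.mp hΔindep (a - b) (by rw [map_sub, h, sub_self])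
  exact sub_eq_zero.mp this

lemma rootF_inj (hΔindep : LinearIndependent ℝ (fun a : Δ => (a : V))) :
    Function.Injective (rootF Δ) := by
  intro a b h
  rw [rootF_eq_lc, rootF_eq_lc] at h
  have h2 := lc_inj hΔindep h
  ext x
  have := DFunLike.congr_fun h2 x
  simpa [Finsupp.mapRange_apply] using this

lemma rootF_mem_span (hΔindep : LinearIndependent ℝ (fun a : Δ => (a : V)))
    {K : Set V} (hK : K ⊆ Δ) (c : ↥Δ →₀ ℕ)
    (h : rootF Δ c ∈ Submodule.span ℤ K) : ∀ β : ↥Δ, c β ≠ 0 → (β : V) ∈ K := by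
  obtain ⟨e, he, hesum⟩ := Submodule.mem_span_set.mp h
  have hsupp : ∀ x ∈ e.support, x ∈ Δ := fun x hx => hK (he hx)
  set eΔ : ↥Δ →₀ ℤ := e.subtypeDomain (· ∈ Δ) with heΔ
  have h1 : Finsupp.linearCombination ℝ (fun a : Δ => (a : V))
      (eΔ.mapRange Int.cast Int.cast_zero) = rootF Δ c := by
    rw [Finsupp.linearCombination_apply, Finsupp.sum_mapRange_index (by simp), heΔ,
      Finsupp.sum_subtypeDomain_index (h := fun (x : V) (r : ℤ) => (r : ℝ) • x) hsupp, ← hesum]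
    exact Finsupp.sum_congr fun x _ => Int.cast_smul_eq_zsmul ℝ _ _
  rw [rootF_eq_lc] at h1
  have h2 := lc_inj hΔindep h1
  intro β hβ
  have h3 := DFunLike.congr_fun h2 β
  simp only [Finsupp.mapRange_apply] at h3
  have h4 : e (β : V) ≠ 0 := by
    intro h0
    rw [heΔ] at h3
    simp [Finsupp.subtypeDomain_apply, h0] at h3
    exact hβ (by exact_mod_cast h3.symm)
  exact he (Finsupp.mem_support_iff.mpr h4)

lemma rootF_mem_span' {K : Set V} (c : ↥Δ →₀ ℕ)
    (h : ∀ β ∈ c.support, (β : V) ∈ K) : rootF Δ c ∈ Submodule.span ℤ K := by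
  rw [rootF_apply, Finsupp.sum]
  exact Submodule.sum_mem _ fun β hβ =>
    nsmul_mem (Submodule.subset_span (h β hβ)) (c β)

lemma htF_pos {c : ↥Δ →₀ ℕ} (hc : c ≠ 0) : 1 ≤ htF Δ c := by
  rw [htF_apply, Finsupp.sum]
  by_contra h
  push_neg at h
  have h0 : ∑ x ∈ c.support, c x = 0 := Nat.lt_one_iff.mp h
  apply hc
  ext x
  by_cases hx : x ∈ c.support
  · simpa using Finset.sum_eq_zero_iff.mp h0 x hx
  · simpa using Finsupp.notMem_support_iff.mp hx

lemma htF_eq_one {c : ↥Δ →₀ ℕ} (hc : htF Δ c = 1) : ∃ β, c = Finsupp.single β 1 := by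
  classical
  rw [htF_apply, Finsupp.sum] at hc
  have hne : c.support.Nonempty := by
    rcases Finset.eq_empty_or_nonempty c.support with h | h
    · rw [h] at hc; simp at hc
    · exact h
  obtain ⟨β, hβ⟩ := hne
  refine ⟨β, ?_⟩
  have h1 : c β + ∑ x ∈ c.support.erase β, c x = 1 := by
    rw [Finset.add_sum_erase _ _ hβ]; exact hc
  have hβ1 : 1 ≤ c β := Nat.one_le_iff_ne_zero.mpr (Finsupp.mem_support_iff.mp hβ)
  have hcβ : c β = 1 ∧ ∑ x ∈ c.support.erase β, c x = 0 := by omega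
  ext x
  rcases eq_or_ne x β with rfl | hx
  · simp [hcβ.1]
  · rw [Finsupp.single_apply, if_neg (Ne.symm hx)]
    by_cases hxs : x ∈ c.support
    · exact Finset.sum_eq_zero_iff.mp hcβ.2 x (Finset.mem_erase.mpr ⟨hx, hxs⟩)
    · exact Finsupp.notMem_support_iff.mp hxs

lemma rootF_single (β : ↥Δ) (m : ℕ) : rootF Δ (Finsupp.single β m) = m • (β : V) := by
  rw [rootF_apply]
  exact Finsupp.sum_single_index (by simp)

lemma rootF_push (w' : V →ₗ[ℝ] V) (n : ↥Δ →₀ ℕ) (g : ↥Δ → (↥Δ →₀ ℕ))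
    (hg : ∀ β ∈ n.support, w' (β : V) = rootF Δ (g β)) :
    w' (rootF Δ n) = rootF Δ (n.sum fun β m => m • g β) := by
  rw [rootF_apply, map_finsuppSum, map_finsuppSum]
  refine Finsupp.sum_congr fun β hβ => ?_
  rw [map_nsmul, hg β hβ, AddMonoidHom.map_nsmul]

lemma htF_push (n : ↥Δ →₀ ℕ) (g : ↥Δ → (↥Δ →₀ ℕ)) :
    htF Δ (n.sum fun β m => m • g β) = n.sum fun β m => m * htF Δ (g β) := by
  rw [map_finsuppSum]
  refine Finsupp.sum_congr fun β hβ => ?_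
  rw [AddMonoidHom.map_nsmul, smul_eq_mul]

lemma htF_le (p : ↥Δ →₀ ℕ) (g : ↥Δ → (↥Δ →₀ ℕ))
    (hg : ∀ β ∈ p.support, 1 ≤ htF Δ (g β)) :
    htF Δ p ≤ htF Δ (p.sum fun β m => m • g β) := by
  rw [htF_push, htF_apply, Finsupp.sum, Finsupp.sum]
  exact Finset.sum_le_sum fun β hβ => Nat.le_mul_of_pos_right _ (hg β hβ)

end aux


/-- Let `Φ` be a finite root system in a real vector space `V` with base `Δ` and positive
roots `Pos = Φ⁺`.  Let `I, J ⊆ Δ` and let `w` (an element of the Weyl group, i.e. a linear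
automorphism of `V` permuting `Φ`) be such that `w⁻¹(α) ∈ Φ⁺` for every `α ∈ I` and
`w(β) ∈ Φ⁺` for every `β ∈ J`.  Then `Φ_I ∩ w(Φ_J⁺) = Φ_{I ∩ w(J)}⁺`, where
`Φ_K := Φ ∩ span_ℤ(K)` and `Φ_K⁺ := Φ_K ∩ Φ⁺`. -/
theorem stmt_6 {V : Type*} [AddCommGroup V] [Module ℝ V]
    (Φ : Set V) (hΦfin : Φ.Finite) (hΦ0 : (0 : V) ∉ Φ)
    (Δ : Set V) (hΔΦ : Δ ⊆ Φ)
    (hΔindep : LinearIndependent ℝ (fun a : Δ => (a : V)))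
    (Pos : Set V)
    (hPos : Pos = {α ∈ Φ | ∃ c : Δ →₀ ℕ, α = c.sum fun β m => m • (β : V)})
    (hsign : ∀ α ∈ Φ, (∃ c : Δ →₀ ℕ, α = c.sum fun β m => m • (β : V)) ∨
        (∃ c : Δ →₀ ℕ, α = -(c.sum fun β m => m • (β : V))))
    (w : V ≃ₗ[ℝ] V) (hw : ∀ v : V, v ∈ Φ ↔ w v ∈ Φ)
    (I J : Set V) (hI : I ⊆ Δ) (hJ : J ⊆ Δ)
    (hwI : ∀ α ∈ I, w.symm α ∈ Pos) (hwJ : ∀ β ∈ J, w β ∈ Pos) :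
    (Φ ∩ (Submodule.span ℤ I : Set V)) ∩
        (⇑w '' ((Φ ∩ (Submodule.span ℤ J : Set V)) ∩ Pos)) =
      (Φ ∩ (Submodule.span ℤ (I ∩ ⇑w '' J) : Set V)) ∩ Pos := by
  classical
  -- Pos membership characterization
  have hPosMem : ∀ x : V, x ∈ Pos ↔ x ∈ Φ ∧ ∃ c : ↥Δ →₀ ℕ, x = rootF Δ c := by
    intro x
    rw [hPos]
    constructor
    · rintro ⟨h1, c, h2⟩; exact ⟨h1, c, by rw [h2, rootF_apply]⟩
    · rintro ⟨h1, c, h2⟩; exact ⟨h1, c, by rw [h2, rootF_apply]⟩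
  -- choice functions for the coefficients of w(β), β ∈ J, and w⁻¹(α), α ∈ I
  have hJg : ∀ β : ↥Δ, (β : V) ∈ J → ∃ c : ↥Δ →₀ ℕ, w (β : V) = rootF Δ c :=
    fun β hβ => ((hPosMem _).mp (hwJ _ hβ)).2
  have hIg : ∀ α : ↥Δ, (α : V) ∈ I → ∃ c : ↥Δ →₀ ℕ, w.symm (α : V) = rootF Δ c :=
    fun α hα => ((hPosMem _).mp (hwI _ hα)).2
  set gJ : ↥Δ → (↥Δ →₀ ℕ) := fun β => if h : (β : V) ∈ J then (hJg β h).choose else 0 with hgJdef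
  set gI : ↥Δ → (↥Δ →₀ ℕ) := fun α => if h : (α : V) ∈ I then (hIg α h).choose else 0 with hgIdef
  have hgJ : ∀ β : ↥Δ, (β : V) ∈ J → w (β : V) = rootF Δ (gJ β) := by
    intro β h; rw [hgJdef]; simp only [dif_pos h]; exact (hJg β h).choose_spec
  have hgI : ∀ α : ↥Δ, (α : V) ∈ I → w.symm (α : V) = rootF Δ (gI α) := by
    intro α h; rw [hgIdef]; simp only [dif_pos h]; exact (hIg α h).choose_spec
  have hgJne : ∀ β : ↥Δ, (β : V) ∈ J → gJ β ≠ 0 := by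
    intro β h h0
    have h1 := hgJ β h
    rw [h0, map_zero] at h1
    exact hΦ0 (h1 ▸ (hw _).mp (hΔΦ (hJ h)))
  have hgIne : ∀ α : ↥Δ, (α : V) ∈ I → gI α ≠ 0 := by
    intro α h h0
    have h1 := hgI α h
    rw [h0, map_zero] at h1
    have h2 : (α : V) ∈ Φ := hΔΦ (hI h)
    have h3 : w.symm (α : V) ∈ Φ := by
      rw [hw (w.symm (α : V))]
      simpa using h2
    exact hΦ0 (h1 ▸ h3)
  ext γ
  constructor
  · rintro ⟨⟨hγΦ, hγI⟩, δ, ⟨⟨hδΦ, hδJ⟩, hδPos⟩, hwδ⟩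
    obtain ⟨-, n, hn⟩ := (hPosMem δ).mp hδPos
    have hnJ : ∀ β ∈ n.support, (β : V) ∈ J := fun β hβ =>
      rootF_mem_span hΔindep hJ n (hn ▸ hδJ) β (Finsupp.mem_support_iff.mp hβ)
    set C : ↥Δ →₀ ℕ := n.sum fun β m => m • gJ β with hCdef
    have hγC : γ = rootF Δ C := by
      rw [← hwδ, hn, hCdef]
      exact rootF_push (w : V →ₗ[ℝ] V) n gJ fun β hβ => hgJ β (hnJ β hβ)
    have hγPos : γ ∈ Pos := (hPosMem γ).mpr ⟨hγΦ, C, hγC⟩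
    have hCI : ∀ α ∈ C.support, (α : V) ∈ I := fun α hα =>
      rootF_mem_span hΔindep hI C (hγC ▸ hγI) α (Finsupp.mem_support_iff.mp hα)
    set C' : ↥Δ →₀ ℕ := C.sum fun α m => m • gI α with hC'def
    have hδC' : δ = rootF Δ C' := by
      have := rootF_push (w.symm : V →ₗ[ℝ] V) C gI fun α hα => hgI α (hCI α hα)
      rw [← hC'def] at this
      rw [← this]
      simp only [LinearEquiv.coe_coe, ← hγC, ← hwδ, LinearEquiv.symm_apply_apply]
    have hC'n : C' = n := rootF_inj hΔindep (by rw [← hδC', hn])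
    -- heights
    have hle1 : htF Δ n ≤ htF Δ C :=
      htF_le n gJ fun β hβ => htF_pos (hgJne β (hnJ β hβ))
    have hle2 : htF Δ C ≤ htF Δ n := by
      have := htF_le C gI fun α hα => htF_pos (hgIne α (hCI α hα))
      rwa [← hC'def, hC'n] at this
    -- all heights of gJ β equal 1
    have hall : ∀ β ∈ n.support, htF Δ (gJ β) = 1 := by
      intro β hβ
      by_contra hne
      have h2 : 2 ≤ htF Δ (gJ β) := by
        have := htF_pos (hgJne β (hnJ β hβ)); omega
      have hlt : htF Δ n < htF Δ C := by
        rw [hCdef, htF_push, htF_apply, Finsupp.sum, Finsupp.sum]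
        refine Finset.sum_lt_sum (fun i hi => Nat.le_mul_of_pos_right _
          (htF_pos (hgJne i (hnJ i hi)))) ⟨β, hβ, ?_⟩
        have hnb : 1 ≤ n β := Nat.one_le_iff_ne_zero.mpr (Finsupp.mem_support_iff.mp hβ)
        calc n β = n β * 1 := (mul_one _).symm
          _ < n β * htF Δ (gJ β) := Nat.mul_lt_mul_of_pos_left (by omega) (by omega)
      omega
    -- each w β, β ∈ supp n, lies in I ∩ w '' J
    have hkey : ∀ β ∈ n.support, w (β : V) ∈ I ∩ ⇑w '' J := by
      intro β hβ
      obtain ⟨d, hd⟩ := htF_eq_one (hall β hβ)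
      have hwβ : w (β : V) = (d : V) := by
        rw [hgJ β (hnJ β hβ), hd, rootF_single, one_smul]
      have hdC : d ∈ C.support := by
        rw [Finsupp.mem_support_iff]
        have hCd : C d = n.sum fun β' m => m * (gJ β') d := by
          rw [hCdef, Finsupp.sum_apply]
          exact Finsupp.sum_congr fun _ _ => by rw [Finsupp.smul_apply, smul_eq_mul]
        rw [hCd, Finsupp.sum]
        have hterm : n β * (gJ β) d ≠ 0 := by
          rw [hd]
          simp [Finsupp.mem_support_iff.mp hβ]
        intro h0
        exact hterm (Finset.sum_eq_zero_iff.mp h0 β hβ)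
      refine ⟨hwβ ▸ hCI d hdC, ⟨(β : V), hnJ β hβ, rfl⟩⟩
    have hγspan : γ ∈ Submodule.span ℤ (I ∩ ⇑w '' J) := by
      have : γ = n.sum fun β m => m • w (β : V) := by
        rw [← hwδ, hn, rootF_apply, map_finsuppSum]
        exact Finsupp.sum_congr fun β hβ => by rw [map_nsmul]
      rw [this, Finsupp.sum]
      exact Submodule.sum_mem _ fun β hβ =>
        nsmul_mem (Submodule.subset_span (hkey β hβ)) _
    exact ⟨⟨hγΦ, hγspan⟩, hγPos⟩
  · rintro ⟨⟨hγΦ, hγK⟩, hγPos⟩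
    have hδΦ : w.symm γ ∈ Φ := by
      rw [hw (w.symm γ)]
      simpa using hγΦ
    have hδJ : w.symm γ ∈ Submodule.span ℤ J := by
      have h1 : γ ∈ Submodule.span ℤ (⇑w '' J) :=
        Submodule.span_mono Set.inter_subset_right hγK
      have h2 : Submodule.span ℤ (⇑w '' J) =
          Submodule.map ((w : V →ₗ[ℝ] V).restrictScalars ℤ) (Submodule.span ℤ J) := by
        rw [← Submodule.span_image]
        congr 1
      rw [h2] at h1
      obtain ⟨x, hx, hxγ⟩ := h1
      have : w.symm γ = x := by
        rw [← hxγ]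
        simp
      rwa [this]
    have hδPos : w.symm γ ∈ Pos := by
      rcases hsign _ hδΦ with ⟨c, hc⟩ | ⟨c, hc⟩
      · exact (hPosMem _).mpr ⟨hδΦ, c, by rw [hc, rootF_apply]⟩
      · exfalso
        have hc' : w.symm γ = -(rootF Δ c) := by rw [hc, rootF_apply]
        have hcJ : rootF Δ c ∈ Submodule.span ℤ J := by
          have := neg_mem hδJ
          rwa [hc', neg_neg] at this
        have hcsupp : ∀ β ∈ c.support, (β : V) ∈ J := fun β hβ =>
          rootF_mem_span hΔindep hJ c hcJ β (Finsupp.mem_support_iff.mp hβ)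
        have hpush := rootF_push (w : V →ₗ[ℝ] V) c gJ fun β hβ => hgJ β (hcsupp β hβ)
        have hwneg : w (rootF Δ c) = -γ := by
          rw [← neg_neg (rootF Δ c), ← hc', map_neg]
          simp
        obtain ⟨-, m, hm⟩ := (hPosMem γ).mp hγPos
        have hsum : rootF Δ (m + (c.sum fun β m => m • gJ β)) = 0 := by
          rw [map_add, ← hpush]
          simp only [LinearEquiv.coe_coe]
          rw [hwneg, ← hm]
          exact add_neg_cancel γ
        have hm0 : m + (c.sum fun β m => m • gJ β) = 0 :=
          rootF_inj hΔindep (by rw [hsum, map_zero])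
        have hmz : m = 0 := by
          ext x
          have hx := DFunLike.congr_fun hm0 x
          simp only [Finsupp.add_apply, Finsupp.coe_zero, Pi.zero_apply] at hx ⊢
          omega
        rw [hmz, map_zero] at hm
        exact hΦ0 (hm ▸ hγΦ)
    exact ⟨⟨hγΦ, Submodule.span_mono Set.inter_subset_left hγK⟩,
      w.symm γ, ⟨⟨hδΦ, hδJ⟩, hδPos⟩, by simp⟩
end

section
/- Let I, J ⊆ Δ and let w ∈ W be such that w^{-1}(α) ∈ Φ^+ for every α ∈ I and w(β) ∈ Φ^+ for every β ∈ J. Then Φ_I ∩ w(Φ^+ \ Φ_J^+) = Φ_I^+ \ Φ_{I ∩ w(J)}^+. -/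
/-!
Everything happens in the cone `span ℕ Δ` of nonnegative integer combinations of simple roots.
Linear independence of `Δ` gives a height functional equal to `1` on `Δ`; it takes positive
integer values on the nonzero elements of the cone, so the cone is pointed and every simple
root is indecomposable in it. It also makes `span ℕ K`, for `K ⊆ Δ`, a face of the cone.

Since `w⁻¹` maps `I` into the cone, it maps the cone part of `span I` into the cone. Hence a
positive `β` with `w β ∈ Φ_I` negative would have `-β` positive, which is impossible. Conversely,
if `γ ∈ Φ_I⁺` has `w⁻¹ γ ∈ span ℕ J`, then `γ` is a nonnegative combination of the positive roots
`w δ` (`δ ∈ J`), and by the face property those occurring lie in `span ℕ I`; applying `w⁻¹`,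
indecomposability of `δ` forces `w δ ∈ I`, so `γ ∈ span (I ∩ w J)`.
-/

open Submodule

theorem mem_span_nat_iff_exists_finsupp {M : Type*} [AddCommMonoid M] {s : Set M} {v : M} :
    v ∈ span ℕ s ↔ ∃ c : s →₀ ℕ, v = c.sum fun β m => m • (β : M) := by
  conv_lhs => rw [← Subtype.range_coe (s := s)]
  rw [Finsupp.mem_span_range_iff_exists_finsupp]
  simp only [eq_comm]

theorem exists_add_of_mem_span_nat {M : Type*} [AddCommMonoid M] {Δ K : Set M} {v : M}
    (hv : v ∈ span ℕ Δ) :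
    ∃ a ∈ span ℕ K, ∃ b ∈ span ℕ (Δ \ K), a + b = v := by
  rw [← mem_sup, ← span_union, Set.union_sdiff_self]
  exact span_mono Set.subset_union_right hv

section NatCone

variable {V : Type*} [AddCommGroup V] [Module ℝ V] {Δ : Set V}

theorem exists_nat_eq_of_mem_span_nat {φ : V →ₗ[ℝ] ℝ} (hφ : ∀ δ ∈ Δ, φ δ = 1) {v : V}
    (hv : v ∈ span ℕ Δ) : ∃ n : ℕ, φ v = n ∧ (n = 0 → v = 0) := by
  induction hv using span_induction with
  | mem x hx => exact ⟨1, by rw [hφ x hx, Nat.cast_one], by simp⟩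
  | zero => exact ⟨0, by simp, fun _ => rfl⟩
  | add x y _ _ hx hy =>
    obtain ⟨n, hn, hn0⟩ := hx
    obtain ⟨m, hm, hm0⟩ := hy
    refine ⟨n + m, by rw [map_add, hn, hm, Nat.cast_add], fun h => ?_⟩
    rw [hn0 (by omega), hm0 (by omega), add_zero]
  | smul k x _ hx =>
    obtain ⟨n, hn, hn0⟩ := hx
    refine ⟨k * n, by rw [map_nsmul, hn, nsmul_eq_mul, Nat.cast_mul], fun h => ?_⟩
    rcases Nat.mul_eq_zero.mp h with h | h
    · rw [h, zero_smul]
    · rw [hn0 h, smul_zero]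

namespace LinearIndepOn

theorem exists_linearMap_apply_eq (hΔ : LinearIndepOn ℝ id Δ) (t : Δ → ℝ) :
    ∃ φ : V →ₗ[ℝ] ℝ, ∀ δ : Δ, φ δ = t δ := by
  classical
  let B := Module.Basis.extend hΔ
  refine ⟨B.constr ℝ fun b => if h : (b : V) ∈ Δ then t ⟨b, h⟩ else 0, fun δ => ?_⟩
  have hδ : (δ : V) = B ⟨δ, hΔ.subset_extend _ δ.2⟩ :=
    (Module.Basis.extend_apply_self hΔ ⟨δ, hΔ.subset_extend _ δ.2⟩).symm
  rw [hδ, Module.Basis.constr_basis]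
  simp

theorem exists_height (hΔ : LinearIndepOn ℝ id Δ) : ∃ φ : V →ₗ[ℝ] ℝ, ∀ δ ∈ Δ, φ δ = 1 :=
  (hΔ.exists_linearMap_apply_eq 1).imp fun _ hφ δ hδ => hφ ⟨δ, hδ⟩

theorem eq_zero_of_neg_mem_span_nat (hΔ : LinearIndepOn ℝ id Δ) {v : V}
    (hv : v ∈ span ℕ Δ) (hv' : -v ∈ span ℕ Δ) : v = 0 := by
  obtain ⟨φ, hφ⟩ := hΔ.exists_height
  obtain ⟨n, hn, hn0⟩ := exists_nat_eq_of_mem_span_nat hφ hv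
  obtain ⟨m, hm, -⟩ := exists_nat_eq_of_mem_span_nat hφ hv'
  rw [map_neg, hn] at hm
  have hnm : (n : ℝ) + m = 0 := by linarith
  exact hn0 (by exact_mod_cast (Nat.add_eq_zero_iff.mp (by exact_mod_cast hnm)).1)

theorem mem_of_mem_span_nat (hΔ : LinearIndepOn ℝ id Δ) {S : Set V} (hS : S ⊆ span ℕ Δ)
    {δ : V} (hδ : δ ∈ Δ) (h : δ ∈ span ℕ S) : δ ∈ S := by
  obtain ⟨φ, hφ⟩ := hΔ.exists_height
  have hSΔ : span ℕ S ≤ span ℕ Δ := span_le.mpr hS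
  suffices ∀ v ∈ span ℕ S, φ v = 1 → v ∈ S from this δ h (hφ δ hδ)
  intro v hv
  induction hv using span_induction with
  | mem x hx => exact fun _ => hx
  | zero => simp
  | add x y hx hy ihx ihy =>
    obtain ⟨n, hn, hn0⟩ := exists_nat_eq_of_mem_span_nat hφ (hSΔ hx)
    obtain ⟨m, hm, hm0⟩ := exists_nat_eq_of_mem_span_nat hφ (hSΔ hy)
    intro hxy
    have hnm : n + m = 1 := by
      rw [map_add, hn, hm] at hxy
      exact_mod_cast hxy
    rcases Nat.eq_zero_or_pos n with h0 | h0
    · rw [hn0 h0, zero_add] at hxy ⊢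
      exact ihy hxy
    · rw [hm0 (by omega), add_zero] at hxy ⊢
      exact ihx hxy
  | smul k x hx ih =>
    obtain ⟨n, hn, -⟩ := exists_nat_eq_of_mem_span_nat hφ (hSΔ hx)
    intro hkx
    have hk : k = 1 := by
      rw [map_nsmul, hn, nsmul_eq_mul] at hkx
      exact Nat.eq_one_of_mul_eq_one_right (by exact_mod_cast hkx)
    rw [hk, one_smul] at hkx ⊢
    exact ih hkx

theorem disjoint_span_diff (hΔ : LinearIndepOn ℝ id Δ) {K : Set V} (hK : K ⊆ Δ) :
    Disjoint (span ℝ K) (span ℝ (Δ \ K)) := by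
  rw [← Set.union_sdiff_cancel hK] at hΔ
  exact ((linearIndepOn_id_union_iff Set.disjoint_sdiff_right).mp hΔ).2.2


theorem eq_zero_of_mem_span_diff (hΔ : LinearIndepOn ℝ id Δ) {K : Set V} (hK : K ⊆ Δ) {b : V}
    (hb : b ∈ span ℕ (Δ \ K)) (hbK : b ∈ span ℝ K) : b = 0 :=
  disjoint_def.mp (hΔ.disjoint_span_diff hK) b hbK (span_subset_span ℕ ℝ _ hb)

theorem mem_span_nat_of_mem_span (hΔ : LinearIndepOn ℝ id Δ) {K : Set V} (hK : K ⊆ Δ) {v : V}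
    (hv : v ∈ span ℕ Δ) (hvK : v ∈ span ℝ K) : v ∈ span ℕ K := by
  obtain ⟨a, ha, b, hb, rfl⟩ := exists_add_of_mem_span_nat (K := K) hv
  have hbK : b ∈ span ℝ K := by
    simpa using sub_mem hvK (span_subset_span ℕ ℝ K ha)
  rwa [hΔ.eq_zero_of_mem_span_diff hK hb hbK, add_zero]

theorem mem_span_of_add_mem_span (hΔ : LinearIndepOn ℝ id Δ) {K : Set V} (hK : K ⊆ Δ) {a b : V}
    (ha : a ∈ span ℕ Δ) (hb : b ∈ span ℕ Δ) (hab : a + b ∈ span ℝ K) : a ∈ span ℝ K := by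
  obtain ⟨a₁, ha₁, a₂, ha₂, rfl⟩ := exists_add_of_mem_span_nat (K := K) ha
  obtain ⟨b₁, hb₁, b₂, hb₂, rfl⟩ := exists_add_of_mem_span_nat (K := K) hb
  have h₂K : a₂ + b₂ ∈ span ℝ K := by
    have := sub_mem (sub_mem hab (span_subset_span ℕ ℝ K ha₁)) (span_subset_span ℕ ℝ K hb₁)
    convert this using 1
    abel
  have h₂ : a₂ + b₂ = 0 := hΔ.eq_zero_of_mem_span_diff hK (add_mem ha₂ hb₂) h₂K
  have hdiff : span ℕ (Δ \ K) ≤ span ℕ Δ := span_mono Set.sdiff_subset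
  have ha₂0 : a₂ = 0 := hΔ.eq_zero_of_neg_mem_span_nat (hdiff ha₂)
    (by rw [neg_eq_of_add_eq_zero_right h₂]; exact hdiff hb₂)
  rw [ha₂0, add_zero]
  exact span_subset_span ℕ ℝ K ha₁

theorem mem_span_nat_inter_of_mem_span (hΔ : LinearIndepOn ℝ id Δ) {K : Set V} (hK : K ⊆ Δ)
    {S : Set V} (hS : S ⊆ span ℕ Δ) {v : V} (hv : v ∈ span ℕ S) (hvK : v ∈ span ℝ K) :
    v ∈ span ℕ (S ∩ span ℝ K) := by
  have hSΔ : span ℕ S ≤ span ℕ Δ := span_le.mpr hS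
  induction hv using span_induction with
  | mem x hx => exact subset_span ⟨hx, hvK⟩
  | zero => exact zero_mem _
  | add x y hx hy ihx ihy =>
    exact add_mem (ihx (hΔ.mem_span_of_add_mem_span hK (hSΔ hx) (hSΔ hy) hvK))
      (ihy (hΔ.mem_span_of_add_mem_span hK (hSΔ hy) (hSΔ hx) (by rwa [add_comm])))
  | smul k x _ ih =>
    rcases eq_or_ne k 0 with rfl | hk
    · rw [zero_smul]
      exact zero_mem _
    rw [← Nat.cast_smul_eq_nsmul ℝ, smul_mem_iff _ (Nat.cast_ne_zero.mpr hk)] at hvK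
    exact smul_mem _ k (ih hvK)

end LinearIndepOn

end NatCone

section WeylGroup

variable {V : Type*} [AddCommGroup V] [Module ℝ V] {Δ : Set V} {w : V ≃ₗ[ℝ] V} {I J : Set V}

namespace LinearIndepOn

theorem symm_apply_mem_span_nat (hΔ : LinearIndepOn ℝ id Δ) (hI : I ⊆ Δ)
    (hwI : w.symm '' I ⊆ span ℕ Δ) {v : V} (hv : v ∈ span ℕ Δ) (hvI : v ∈ span ℝ I) :
    w.symm v ∈ span ℕ Δ :=
  span_le.mpr hwI <| apply_mem_span_image_of_mem_span (w.symm.toLinearMap.restrictScalars ℕ)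
    (hΔ.mem_span_nat_of_mem_span hI hv hvI)

theorem eq_zero_of_neg_apply_mem_span_nat (hΔ : LinearIndepOn ℝ id Δ) (hI : I ⊆ Δ)
    (hwI : w.symm '' I ⊆ span ℕ Δ) {β : V} (hβ : β ∈ span ℕ Δ) (hneg : -w β ∈ span ℕ Δ)
    (hβI : w β ∈ span ℝ I) : β = 0 :=
  hΔ.eq_zero_of_neg_mem_span_nat hβ
    (by simpa using hΔ.symm_apply_mem_span_nat hI hwI hneg (neg_mem hβI))

theorem apply_mem_of_apply_mem_span_nat (hΔ : LinearIndepOn ℝ id Δ)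
    (hwI : w.symm '' I ⊆ span ℕ Δ) {δ : V} (hδ : δ ∈ Δ) (h : w δ ∈ span ℕ I) : w δ ∈ I := by
  have hδI : δ ∈ span ℕ (w.symm '' I) := by
    simpa using apply_mem_span_image_of_mem_span (w.symm.toLinearMap.restrictScalars ℕ) h
  obtain ⟨α, hα, rfl⟩ := hΔ.mem_of_mem_span_nat hwI hδ hδI
  simpa using hα

theorem mem_span_nat_inter_image (hΔ : LinearIndepOn ℝ id Δ) (hI : I ⊆ Δ) (hJ : J ⊆ Δ)
    (hwI : w.symm '' I ⊆ span ℕ Δ) (hwJ : w '' J ⊆ span ℕ Δ) {γ : V} (hγ : γ ∈ span ℝ I)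
    (hβ : w.symm γ ∈ span ℕ J) : γ ∈ span ℕ (I ∩ w '' J) := by
  have hγJ : γ ∈ span ℕ (w '' J) := by
    simpa using apply_mem_span_image_of_mem_span (w.toLinearMap.restrictScalars ℕ) hβ
  refine span_mono ?_ (hΔ.mem_span_nat_inter_of_mem_span hI hwJ hγJ hγ)
  rintro _ ⟨⟨δ, hδ, rfl⟩, hδI⟩
  refine ⟨hΔ.apply_mem_of_apply_mem_span_nat hwI (hJ hδ) ?_, δ, hδ, rfl⟩
  exact hΔ.mem_span_nat_of_mem_span hI (hwJ ⟨δ, hδ, rfl⟩) hδI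

theorem inter_image_diff_eq (hΔ : LinearIndepOn ℝ id Δ) {Φ : Set V}
    (hsign : ∀ α ∈ Φ, α ∈ span ℕ Δ ∨ -α ∈ span ℕ Δ) (hw : ∀ v : V, v ∈ Φ ↔ w v ∈ Φ)
    (hI : I ⊆ Δ) (hJ : J ⊆ Δ) (hwI : w.symm '' I ⊆ span ℕ Δ) (hwJ : w '' J ⊆ span ℕ Δ) :
    (Φ ∩ (span ℤ I : Set V)) ∩ (w '' ((Φ ∩ span ℕ Δ) \ ((Φ ∩ span ℤ J) ∩ (Φ ∩ span ℕ Δ)))) =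
      ((Φ ∩ span ℤ I) ∩ (Φ ∩ span ℕ Δ)) \ ((Φ ∩ span ℤ (I ∩ w '' J)) ∩ (Φ ∩ span ℕ Δ)) := by
  ext γ
  constructor
  · rintro ⟨⟨hγΦ, hγI⟩, β, ⟨⟨hβΦ, hβC⟩, hβJ⟩, rfl⟩
    have hβ0 : β ≠ 0 := fun h => hβJ ⟨⟨hβΦ, h ▸ zero_mem _⟩, hβΦ, hβC⟩
    have hwβC : w β ∈ span ℕ Δ := (hsign _ hγΦ).resolve_right fun hneg =>
      hβ0 (hΔ.eq_zero_of_neg_apply_mem_span_nat hI hwI hβC hneg (span_subset_span ℤ ℝ I hγI))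
    refine ⟨⟨⟨hγΦ, hγI⟩, hγΦ, hwβC⟩, fun ⟨⟨_, hK⟩, _⟩ => hβJ ⟨⟨hβΦ, ?_⟩, hβΦ, hβC⟩⟩
    exact (apply_mem_span_image_iff_mem_span (f := w.toLinearMap.restrictScalars ℤ)
      w.injective).mp (span_mono Set.inter_subset_right hK)
  · rintro ⟨⟨⟨hγΦ, hγI⟩, -, hγC⟩, hγK⟩
    have hγI' : γ ∈ span ℝ I := span_subset_span ℤ ℝ I hγI
    refine ⟨⟨hγΦ, hγI⟩, w.symm γ, ⟨⟨(hw _).mpr (by simpa using hγΦ),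
      hΔ.symm_apply_mem_span_nat hI hwI hγC hγI'⟩, ?_⟩, w.apply_symm_apply γ⟩
    rintro ⟨⟨-, hβJ⟩, -, hβC⟩
    have hβJ' := hΔ.mem_span_nat_of_mem_span hJ hβC (span_subset_span ℤ ℝ J hβJ)
    exact hγK ⟨⟨hγΦ, span_subset_span ℕ ℤ _
      (hΔ.mem_span_nat_inter_image hI hJ hwI hwJ hγI' hβJ')⟩, hγΦ, hγC⟩

end LinearIndepOn

end WeylGroup

theorem stmt_7_general {V : Type*} [AddCommGroup V] [Module ℝ V]
    (Φ : Set V)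
    (Δ : Set V)
    (hΔindep : LinearIndependent ℝ (fun a : Δ => (a : V)))
    (Pos : Set V)
    (hPos : Pos = {α ∈ Φ | ∃ c : Δ →₀ ℕ, α = c.sum fun β m => m • (β : V)})
    (hsign : ∀ α ∈ Φ, (∃ c : Δ →₀ ℕ, α = c.sum fun β m => m • (β : V)) ∨
        (∃ c : Δ →₀ ℕ, α = -(c.sum fun β m => m • (β : V))))
    (w : V ≃ₗ[ℝ] V) (hw : ∀ v : V, v ∈ Φ ↔ w v ∈ Φ)
    (I J : Set V) (hI : I ⊆ Δ) (hJ : J ⊆ Δ)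
    (hwI : ∀ α ∈ I, w.symm α ∈ Pos) (hwJ : ∀ β ∈ J, w β ∈ Pos) :
    (Φ ∩ (Submodule.span ℤ I : Set V)) ∩
        (⇑w '' (Pos \ ((Φ ∩ (Submodule.span ℤ J : Set V)) ∩ Pos))) =
      ((Φ ∩ (Submodule.span ℤ I : Set V)) ∩ Pos) \
        ((Φ ∩ (Submodule.span ℤ (I ∩ ⇑w '' J) : Set V)) ∩ Pos) := by
  have hPosC : Pos = Φ ∩ span ℕ Δ := by
    ext α
    simp [hPos, mem_span_nat_iff_exists_finsupp]
  have hsignC : ∀ α ∈ Φ, α ∈ span ℕ Δ ∨ -α ∈ span ℕ Δ := fun α hα => by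
    simpa [mem_span_nat_iff_exists_finsupp, neg_eq_iff_eq_neg] using hsign α hα
  subst hPosC
  exact LinearIndepOn.inter_image_diff_eq hΔindep hsignC hw hI hJ
    (Set.image_subset_iff.mpr fun α hα => (hwI α hα).2)
    (Set.image_subset_iff.mpr fun β hβ => (hwJ β hβ).2)

/-- Let `Φ` be a finite root system in a real vector space `V` with base `Δ` and positive
roots `Pos = Φ⁺`.  Let `I, J ⊆ Δ` and let `w` (an element of the Weyl group, i.e. a linear
automorphism of `V` permuting `Φ`) be such that `w⁻¹(α) ∈ Φ⁺` for every `α ∈ I` and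
`w(β) ∈ Φ⁺` for every `β ∈ J`.  Then
`Φ_I ∩ w(Φ⁺ \ Φ_J⁺) = Φ_I⁺ \ Φ_{I ∩ w(J)}⁺`, where `Φ_K := Φ ∩ span_ℤ(K)` and
`Φ_K⁺ := Φ_K ∩ Φ⁺`. -/
theorem stmt_7 {V : Type*} [AddCommGroup V] [Module ℝ V]
    (Φ : Set V) (hΦfin : Φ.Finite) (hΦ0 : (0 : V) ∉ Φ)
    (Δ : Set V) (hΔΦ : Δ ⊆ Φ)
    (hΔindep : LinearIndependent ℝ (fun a : Δ => (a : V)))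
    (Pos : Set V)
    (hPos : Pos = {α ∈ Φ | ∃ c : Δ →₀ ℕ, α = c.sum fun β m => m • (β : V)})
    (hsign : ∀ α ∈ Φ, (∃ c : Δ →₀ ℕ, α = c.sum fun β m => m • (β : V)) ∨
        (∃ c : Δ →₀ ℕ, α = -(c.sum fun β m => m • (β : V))))
    (w : V ≃ₗ[ℝ] V) (hw : ∀ v : V, v ∈ Φ ↔ w v ∈ Φ)
    (I J : Set V) (hI : I ⊆ Δ) (hJ : J ⊆ Δ)
    (hwI : ∀ α ∈ I, w.symm α ∈ Pos) (hwJ : ∀ β ∈ J, w β ∈ Pos) :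
    (Φ ∩ (Submodule.span ℤ I : Set V)) ∩
        (⇑w '' (Pos \ ((Φ ∩ (Submodule.span ℤ J : Set V)) ∩ Pos))) =
      ((Φ ∩ (Submodule.span ℤ I : Set V)) ∩ Pos) \
        ((Φ ∩ (Submodule.span ℤ (I ∩ ⇑w '' J) : Set V)) ∩ Pos) :=
  stmt_7_general Φ Δ hΔindep Pos hPos hsign w hw I J hI hJ hwI hwJ
end

section
/- Let K ⊆ J ⊆ S and set K' := w_{J,0} K w_{J,0} ⊆ J. Write ᴷW_J for the set of elements u of W_J of minimal length in their coset W_K u. Then the map u ↦ w_{J,0} w_{K,0} u is a bijection from ᴷW_J onto ᴷ'W_J which reverses the Bruhat order: for all u, u' ∈ ᴷW_J, u ≤ u' if and only if the image of u' is ≤ the image of u (an anti-isomorphism of posets). -/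
/-!
Left multiplication by `w_{K,0}` preserves the Bruhat order on `ᴷW_J`: lengths add in
`w_{K,0} u` for `u ∈ ᴷW_J`, so reduced words of `w_{K,0}` and of `u` concatenate to a reduced
word, and the Bruhat order below an element is the subword order on any one of its reduced words.
Left multiplication by `w_{J,0}` reverses the Bruhat order on `W_J`: everything below an element
of `W_J` lies in `W_J`, and there `ℓ (w_{J,0} z) = ℓ w_{J,0} - ℓ z`, so every Bruhat step
`z → z t` is turned around. Conjugation by `w_{J,0}` maps `K` onto `K'` and `w_{K,0}` to
`w_{K',0}`, so the inverse map `u ↦ w_{J,0} w_{K',0} u` reverses the order as well.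

The Bruhat order is used in its chain form `BruhatChainLE`. Its agreement with the subword form
rests on the strong exchange condition, proved with the sign representation of `W` on `W × ℤˣ`
(as in Björner–Brenti), and on the lifting property `x ≤ y → s x ≤ y ∨ s x ≤ s y`.
-/

variable {B W : Type*} [Group W] {M : CoxeterMatrix B}

/-- The Bruhat order on a Coxeter group: `x ≤ y` iff some reduced word for `y` admits a
sublist which is a reduced word for `x`. -/
def BruhatLE (cs : CoxeterSystem M W) (x y : W) : Prop :=
  ∃ l' : List B, cs.wordProd l' = y ∧ l'.length = cs.length y ∧
    ∃ l : List B, l.Sublist l' ∧ cs.wordProd l = x ∧ l.length = cs.length x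

/-- `ᴷW_J`: the elements of `W_J` of minimal length in their coset `W_K u`. -/
def minRepsIn (cs : CoxeterSystem M W) (J K : Set W) : Set W :=
  {u | u ∈ Subgroup.closure J ∧ ∀ v ∈ Subgroup.closure K, cs.length u ≤ cs.length (v * u)}

/-- `w` is the longest element of the standard parabolic subgroup generated by `X`. -/
def IsLongestOf (cs : CoxeterSystem M W) (X : Set W) (w : W) : Prop :=
  w ∈ Subgroup.closure X ∧ ∀ v ∈ Subgroup.closure X, cs.length v ≤ cs.length w

open scoped List

theorem mul_mul_inv_eq_iff_eq_inv_mul_mul {G : Type*} [Group G] (a t c : G) :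
    a * t * a⁻¹ = c ↔ t = a⁻¹ * c * a := by
  constructor <;> rintro rfl <;> group

theorem Subgroup.closure_image_mul_mul_of_mul_self_eq_one {G : Type*} [Group G] {g : G}
    (hg : g * g = 1) (K : Set G) :
    Subgroup.closure ((fun s => g * s * g) '' K) =
      (Subgroup.closure K).map (MulAut.conj g).toMonoidHom := by
  rw [MonoidHom.map_closure]
  congr 1
  refine Set.image_congr fun s _ => ?_
  simp [inv_eq_of_mul_eq_one_right hg]

namespace CoxeterSystem

variable (cs : CoxeterSystem M W)

local prefix:100 "σ" => cs.simple
local prefix:100 "π" => cs.wordProd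
local prefix:100 "ℓ" => cs.length

theorem simple_mul_mul_simple_eq_iff (i : B) (t c : W) :
    σ i * t * σ i = c ↔ t = σ i * c * σ i := by
  simpa [cs.inv_simple] using mul_mul_inv_eq_iff_eq_inv_mul_mul (σ i) t c

section SignRepresentation

variable [DecidableEq W]

def signPermFun (i : B) (p : W × ℤˣ) : W × ℤˣ :=
  (σ i * p.1 * σ i, if p.1 = σ i then -p.2 else p.2)

theorem signPermFun_involutive (i : B) : Function.Involutive (cs.signPermFun i) := by
  rintro ⟨t, e⟩
  simp only [signPermFun, simple_mul_mul_simple_eq_iff, cs.simple_mul_simple_self, one_mul]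
  split_ifs <;> simp [mul_assoc]

def signPerm (i : B) : Equiv.Perm (W × ℤˣ) := (cs.signPermFun_involutive i).toPerm

theorem signPerm_apply (i : B) (t : W) (e : ℤˣ) :
    cs.signPerm i (t, e) = (σ i * t * σ i, if t = σ i then -e else e) := rfl

theorem signPerm_mul_pow_apply (i j : B) (n : ℕ) (t : W) (e : ℤˣ) :
    ((cs.signPerm i * cs.signPerm j) ^ n) (t, e) =
      ((σ i * σ j) ^ n * t * ((σ i * σ j) ^ n)⁻¹,
        e * ∏ l ∈ Finset.range (2 * n), if (σ i * σ j) ^ l * t = σ j then -1 else 1) := by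
  set p := σ i * σ j
  induction n with
  | zero => simp
  | succ n ih =>
    have hconj : σ j * p ^ n = (p ^ n)⁻¹ * σ j := by
      have : σ j * p * (σ j)⁻¹ = p⁻¹ := by simp [p, mul_assoc]
      rw [← inv_pow, ← this, conj_pow, cs.inv_simple, cs.simple_mul_simple_cancel_right]
    have hj : p ^ n * t * (p ^ n)⁻¹ = σ j ↔ p ^ (2 * n) * t = σ j := by
      rw [mul_mul_inv_eq_iff_eq_inv_mul_mul, ← eq_inv_mul_iff_mul_eq, mul_assoc, hconj,
        two_mul, pow_add, ← mul_assoc, mul_inv_rev]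
    have hi : σ j * (p ^ n * t * (p ^ n)⁻¹) * σ j = σ i ↔ p ^ (2 * n + 1) * t = σ j := by
      have : σ j * σ i * σ j = p⁻¹ * σ j := by simp [p]
      have h' : (p ^ n)⁻¹ * (p⁻¹ * σ j) * p ^ n = (p ^ (2 * n + 1))⁻¹ * σ j := by
        rw [mul_assoc, mul_assoc, hconj, pow_succ, two_mul, pow_add]
        group
      rw [simple_mul_mul_simple_eq_iff, this, mul_mul_inv_eq_iff_eq_inv_mul_mul, h',
        ← eq_inv_mul_iff_mul_eq]
    rw [pow_succ', Equiv.Perm.mul_apply, ih, Equiv.Perm.mul_apply]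
    simp only [signPerm_apply, hi, hj]
    rw [show 2 * (n + 1) = 2 * n + 1 + 1 by ring, Finset.prod_range_succ, Finset.prod_range_succ]
    refine Prod.ext ?_ ?_ <;> dsimp only
    · have hpinv : p⁻¹ = σ j * σ i := by simp [p]
      rw [pow_succ', mul_inv_rev, hpinv]
      simp only [p]
      group
    · split_ifs <;> simp

theorem isLiftable_signPerm : M.IsLiftable cs.signPerm := by
  intro i j
  have hp : (σ i * σ j) ^ M i j = 1 := cs.simple_mul_simple_pow i j
  ext ⟨t, e⟩ : 1
  rw [signPerm_mul_pow_apply, hp, two_mul, Finset.prod_range_add]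
  simp [hp, pow_add, Int.units_mul_self]

def signRep : W →* Equiv.Perm (W × ℤˣ) := cs.lift ⟨cs.signPerm, cs.isLiftable_signPerm⟩

theorem signRep_simple (i : B) : cs.signRep (σ i) = cs.signPerm i :=
  cs.lift_apply_simple cs.isLiftable_signPerm i

theorem signRep_wordProd_apply (ω : List B) (t : W) (e : ℤˣ) :
    cs.signRep (π ω) (t, e) = (π ω * t * (π ω)⁻¹, e * (-1) ^ (cs.rightInvSeq ω).count t) := by
  induction ω with
  | nil => simp
  | cons i ω ih =>
    rw [cs.wordProd_cons, map_mul, Equiv.Perm.mul_apply, ih, signRep_simple, signPerm_apply]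
    simp only [mul_mul_inv_eq_iff_eq_inv_mul_mul, rightInvSeq, List.count_cons, beq_iff_eq,
      eq_comm (a := t)]
    refine Prod.ext ?_ ?_
    · simp only [mul_inv_rev, cs.inv_simple]
      group
    split_ifs <;> simp [pow_succ]

theorem signRep_apply_neg (w t : W) (e : ℤˣ) :
    cs.signRep w (t, -e) = ((cs.signRep w (t, e)).1, -(cs.signRep w (t, e)).2) := by
  obtain ⟨ω, rfl⟩ := cs.wordProd_surjective w
  rw [signRep_wordProd_apply, signRep_wordProd_apply, neg_mul]

theorem IsReflection.signRep_apply_self {t : W} (ht : cs.IsReflection t) (e : ℤˣ) :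
    cs.signRep t (t, e) = (t, -e) := by
  obtain ⟨w, i, rfl⟩ := ht
  obtain ⟨e', hq⟩ : ∃ e', cs.signRep w⁻¹ (w * σ i * w⁻¹, e) = (σ i, e') := by
    obtain ⟨ω, hω⟩ := cs.wordProd_surjective w⁻¹
    rw [← hω, signRep_wordProd_apply, hω]
    exact ⟨_, Prod.ext (by group) rfl⟩
  have hback : cs.signRep w (σ i, e') = (w * σ i * w⁻¹, e) := by
    rw [← hq, ← Equiv.Perm.mul_apply, ← map_mul, mul_inv_cancel, map_one, Equiv.Perm.one_apply]
  rw [map_mul, map_mul, Equiv.Perm.mul_apply, Equiv.Perm.mul_apply, hq, signRep_simple,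
    signPerm_apply, if_pos rfl, cs.simple_mul_simple_self, one_mul, signRep_apply_neg, hback]

end SignRepresentation

/-- The strong exchange condition. Otherwise `signRep (π ω)` fixes `(t, 1)`; writing
`π ω = π ω' * t` with `ω'` reduced then puts `t` into `rightInvSeq ω'`, so that `π ω` would be
shorter than `π ω'`. -/
theorem mem_rightInvSeq_of_isRightInversion {ω : List B} {t : W}
    (h : cs.IsRightInversion (π ω) t) : t ∈ cs.rightInvSeq ω := by
  classical
  obtain ⟨ht, hlt⟩ := h
  by_contra hmem
  obtain ⟨ω', hω', heq⟩ := cs.exists_isReduced (π ω * t)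
  have hsign : ((-1 : ℤˣ)) ^ (cs.rightInvSeq ω').count t = -1 := by
    have h1 := cs.signRep_wordProd_apply ω t 1
    rw [show π ω = π ω' * t by rw [← heq, mul_assoc, ht.mul_self, mul_one], map_mul,
      Equiv.Perm.mul_apply, ht.signRep_apply_self, signRep_apply_neg, signRep_wordProd_apply,
      List.count_eq_zero.mpr hmem] at h1
    simpa [neg_eq_iff_eq_neg] using congrArg Prod.snd h1
  have hmem' : t ∈ cs.rightInvSeq ω' := by
    by_contra h'
    rw [List.count_eq_zero.mpr h', pow_zero] at hsign
    exact units_ne_neg_self 1 hsign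
  have := (cs.isRightInversion_of_mem_rightInvSeq hω' hmem').2
  rw [← heq, mul_assoc, ht.mul_self, mul_one] at this
  omega

theorem exists_sublist_of_isRightInversion {ω : List B} {t : W}
    (h : cs.IsRightInversion (π ω) t) :
    ∃ l, l <+ ω ∧ l.length + 1 = ω.length ∧ π l = π ω * t := by
  obtain ⟨j, hj, rfl⟩ := List.mem_iff_getElem.mp (cs.mem_rightInvSeq_of_isRightInversion h)
  rw [length_rightInvSeq] at hj
  refine ⟨ω.eraseIdx j, List.eraseIdx_sublist _ _, List.length_eraseIdx_add_one hj, ?_⟩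
  rw [← wordProd_mul_getD_rightInvSeq, List.getD_eq_getElem]

theorem exists_sublist_of_isLeftInversion {ω : List B} {t : W}
    (h : cs.IsLeftInversion (π ω) t) :
    ∃ l, l <+ ω ∧ l.length + 1 = ω.length ∧ π l = t * π ω := by
  rw [← isRightInversion_inv_iff, ← wordProd_reverse] at h
  obtain ⟨l, hl, hlen, hπ⟩ := cs.exists_sublist_of_isRightInversion h
  refine ⟨l.reverse, by simpa using hl.reverse, by simpa using hlen, ?_⟩
  rw [wordProd_reverse, hπ, wordProd_reverse, mul_inv_rev, inv_inv, h.1.inv]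

theorem exists_isReduced_sublist (ω : List B) : ∃ l, l <+ ω ∧ cs.IsReduced l ∧ π l = π ω := by
  induction ω with
  | nil => exact ⟨[], List.Sublist.slnil, by simp [IsReduced], rfl⟩
  | cons i ω ih =>
    obtain ⟨l, hl, hred, hπ⟩ := ih
    rcases cs.length_simple_mul (π l) i with hasc | hdesc
    · refine ⟨i :: l, hl.cons_cons i, ?_, by rw [wordProd_cons, wordProd_cons, hπ]⟩
      rw [IsReduced, wordProd_cons, hasc, hred, List.length_cons]
    · obtain ⟨l', hl', hlen, hπ'⟩ := cs.exists_sublist_of_isLeftInversion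
        ⟨cs.isReflection_simple i, (by omega : ℓ (σ i * π l) < ℓ (π l))⟩
      refine ⟨l', (hl'.trans hl).cons i, ?_, by rw [hπ', hπ, wordProd_cons]⟩
      rw [IsReduced, hπ']
      have := hred.eq
      omega

def IsBruhatStep (x y : W) : Prop := cs.IsReflection (x⁻¹ * y) ∧ ℓ x < ℓ y

def BruhatChainLE : W → W → Prop := Relation.ReflTransGen cs.IsBruhatStep

theorem isBruhatStep_simple_mul {x : W} {i : B} (h : ℓ x < ℓ (σ i * x)) :
    cs.IsBruhatStep x (σ i * x) := by
  refine ⟨?_, h⟩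
  simpa [mul_assoc] using (cs.isReflection_simple i).conj x⁻¹

theorem isBruhatStep_of_isLeftDescent {x : W} {i : B} (h : cs.IsLeftDescent x i) :
    cs.IsBruhatStep (σ i * x) x := by
  simpa using cs.isBruhatStep_simple_mul (x := σ i * x) (i := i)
    (by rwa [simple_mul_simple_cancel_left])

variable {cs}

theorem IsBruhatStep.mul_left {x y : W} (h : cs.IsBruhatStep x y) (a : W)
    (hlen : ℓ (a * x) < ℓ (a * y)) : cs.IsBruhatStep (a * x) (a * y) :=
  ⟨by simpa [mul_assoc] using h.1, hlen⟩

theorem BruhatChainLE.length_le {x y : W} (h : cs.BruhatChainLE x y) : ℓ x ≤ ℓ y := by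
  induction h with
  | refl => rfl
  | tail _ hstep ih => exact ih.trans hstep.2.le

theorem BruhatChainLE.eq_of_length_le {x y : W} (h : cs.BruhatChainLE x y)
    (hlen : ℓ y ≤ ℓ x) : x = y := by
  rcases Relation.ReflTransGen.cases_tail h with rfl | ⟨b, hxb, hby⟩
  · rfl
  · exact absurd ((BruhatChainLE.length_le hxb).trans_lt hby.2) (not_lt.mpr hlen)

theorem BruhatChainLE.exists_sublist {x y : W} (h : cs.BruhatChainLE x y) {ω : List B}
    (hω : cs.IsReduced ω) (hy : π ω = y) : ∃ l, l <+ ω ∧ cs.IsReduced l ∧ π l = x := by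
  induction h generalizing ω with
  | refl => exact ⟨ω, List.Sublist.refl ω, hω, hy⟩
  | @tail b y _ hstep ih =>
    obtain ⟨ht, hlt⟩ := hstep
    have hinv : cs.IsRightInversion (π ω) (b⁻¹ * y) := by
      refine ⟨ht, ?_⟩
      rwa [hy, ← ht.inv, mul_inv_rev, inv_inv, mul_inv_cancel_left]
    obtain ⟨l₁, hl₁, -, hπ₁⟩ := cs.exists_sublist_of_isRightInversion hinv
    obtain ⟨l₂, hl₂, hred₂, hπ₂⟩ := cs.exists_isReduced_sublist l₁
    obtain ⟨l, hl, hred, hπ⟩ := ih hred₂ (by rw [hπ₂, hπ₁, hy, ← ht.inv]; group)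
    exact ⟨l, hl.trans (hl₂.trans hl₁), hred, hπ⟩

theorem IsBruhatStep.simple_mul_or {x y : W} (h : cs.IsBruhatStep x y) (i : B) :
    cs.BruhatChainLE (σ i * x) y ∨ cs.BruhatChainLE (σ i * x) (σ i * y) := by
  by_cases hdesc : ℓ (σ i * x) < ℓ x
  · exact Or.inl ((Relation.ReflTransGen.single (cs.isBruhatStep_of_isLeftDescent hdesc)).tail h)
  by_cases hxy : σ i * x = y
  · exact Or.inl (hxy ▸ Relation.ReflTransGen.refl)
  by_cases hlt : ℓ (σ i * x) < ℓ (σ i * y)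
  · exact Or.inr (Relation.ReflTransGen.single (h.mul_left (σ i) hlt))
  -- Otherwise `σ i` is a left descent of `y`, and exchanging a letter in a reduced word
  -- `i :: ω` of `y` that yields `x` gives a too short word for `σ i * x`.
  exfalso
  obtain ⟨ht, hxy_len⟩ := h
  have hx := cs.length_simple_mul x i
  have hy := cs.length_simple_mul y i
  obtain ⟨ω, hω, hπω⟩ := cs.exists_isReduced (σ i * y)
  have hyω : π (i :: ω) = y := by rw [wordProd_cons, ← hπω, simple_mul_simple_cancel_left]
  have hinv : cs.IsRightInversion (π (i :: ω)) (x⁻¹ * y)⁻¹ := by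
    refine ⟨by rwa [ht.inv], ?_⟩
    rw [hyω, mul_inv_rev, inv_inv, mul_inv_cancel_left]
    exact hxy_len
  obtain ⟨l, hl, hlen, hπl⟩ := cs.exists_sublist_of_isRightInversion hinv
  rw [hyω, mul_inv_rev, inv_inv, mul_inv_cancel_left] at hπl
  have hωlen : ω.length = ℓ (σ i * y) := by rw [hπω, hω.eq]
  rcases List.sublist_cons_iff.mp hl with hl' | ⟨l₂, rfl, -⟩
  · rw [hl'.eq_of_length (by simpa using hlen), ← hπω] at hπl
    exact hxy (by rw [← hπl, simple_mul_simple_cancel_left])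
  · rw [wordProd_cons] at hπl
    have hl₂ : π l₂ = σ i * x := by rw [← hπl, simple_mul_simple_cancel_left]
    have := hl₂ ▸ cs.length_wordProd_le l₂
    simp only [List.length_cons] at hlen
    omega

theorem BruhatChainLE.simple_mul_or {x y : W} (h : cs.BruhatChainLE x y) (i : B) :
    cs.BruhatChainLE (σ i * x) y ∨ cs.BruhatChainLE (σ i * x) (σ i * y) := by
  induction h with
  | refl => exact Or.inr Relation.ReflTransGen.refl
  | tail _ hby ih =>
    rcases ih with hb | hb
    · exact Or.inl (hb.tail hby)
    · rcases hby.simple_mul_or i with h' | h'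
      · exact Or.inl (hb.trans h')
      · exact Or.inr (hb.trans h')

variable (cs)

theorem bruhatChainLE_of_sublist {l ω : List B} (hω : cs.IsReduced ω) (hl : l <+ ω) :
    cs.BruhatChainLE (π l) (π ω) := by
  induction ω generalizing l with
  | nil => rw [List.sublist_nil.mp hl]; exact Relation.ReflTransGen.refl
  | cons i ω ih =>
    have hred : cs.IsReduced ω := by simpa using hω.drop 1
    have hasc : ℓ (π ω) < ℓ (σ i * π ω) := by
      have := hω.eq
      rw [wordProd_cons] at this
      rw [this, hred.eq, List.length_cons]
      omega
    have hstep := cs.isBruhatStep_simple_mul hasc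
    rw [wordProd_cons]
    rcases List.sublist_cons_iff.mp hl with hl' | ⟨l₂, rfl, hl₂⟩
    · exact (ih hred hl').tail hstep
    · rw [wordProd_cons]
      exact ((ih hred hl₂).simple_mul_or i).elim (·.tail hstep) id

theorem bruhatLE_iff_bruhatChainLE {x y : W} : BruhatLE cs x y ↔ cs.BruhatChainLE x y := by
  constructor
  · rintro ⟨ω, rfl, hω, l, hl, rfl, -⟩
    exact cs.bruhatChainLE_of_sublist hω.symm hl
  · intro h
    obtain ⟨ω, hω, rfl⟩ := cs.exists_isReduced y
    obtain ⟨l, hl, hred, rfl⟩ := h.exists_sublist hω rfl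
    exact ⟨ω, rfl, hω.symm, l, hl, rfl, hred.symm⟩

section Parabolic

variable {J : Set W}

theorem wordProd_mem_closure {ω : List B} (hω : ∀ i ∈ ω, σ i ∈ J) :
    π ω ∈ Subgroup.closure J :=
  Subgroup.list_prod_mem _ (by simpa using fun i hi => Subgroup.subset_closure (hω i hi))

theorem exists_word_of_mem_closure (hJ : J ⊆ Set.range cs.simple) {w : W}
    (hw : w ∈ Subgroup.closure J) : ∃ ω : List B, (∀ i ∈ ω, σ i ∈ J) ∧ π ω = w := by
  induction hw using Subgroup.closure_induction with
  | mem s hs =>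
    obtain ⟨i, rfl⟩ := hJ hs
    exact ⟨[i], by simpa using hs, by simp⟩
  | one => exact ⟨[], by simp, rfl⟩
  | mul a b _ _ iha ihb =>
    obtain ⟨ω₁, h₁, rfl⟩ := iha
    obtain ⟨ω₂, h₂, rfl⟩ := ihb
    exact ⟨ω₁ ++ ω₂, by simpa [or_imp, forall_and] using ⟨h₁, h₂⟩, cs.wordProd_append ω₁ ω₂⟩
  | inv a _ ih =>
    obtain ⟨ω, h, rfl⟩ := ih
    exact ⟨ω.reverse, by simpa using h, cs.wordProd_reverse ω⟩

theorem exists_isReduced_of_mem_closure (hJ : J ⊆ Set.range cs.simple) {w : W}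
    (hw : w ∈ Subgroup.closure J) :
    ∃ ω : List B, (∀ i ∈ ω, σ i ∈ J) ∧ cs.IsReduced ω ∧ π ω = w := by
  obtain ⟨ω, hω, rfl⟩ := cs.exists_word_of_mem_closure hJ hw
  obtain ⟨l, hl, hred, hπ⟩ := cs.exists_isReduced_sublist ω
  exact ⟨l, fun i hi => hω i (hl.subset hi), hred, hπ⟩

theorem simple_mem_of_mem_closure (hJ : J ⊆ Set.range cs.simple) {i : B}
    (h : σ i ∈ Subgroup.closure J) : σ i ∈ J := by
  obtain ⟨ω, hω, hred, hπ⟩ := cs.exists_isReduced_of_mem_closure hJ h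
  obtain ⟨k, rfl⟩ : ∃ k, ω = [k] := by
    rw [← List.length_eq_one_iff, ← hred.eq, hπ, length_simple]
  rw [← hπ, wordProd_singleton]
  exact hω k (List.mem_singleton_self k)

variable {cs}

theorem BruhatChainLE.mem_closure (hJ : J ⊆ Set.range cs.simple) {x y : W}
    (h : cs.BruhatChainLE x y) (hy : y ∈ Subgroup.closure J) : x ∈ Subgroup.closure J := by
  obtain ⟨ω, hω, hred, rfl⟩ := cs.exists_isReduced_of_mem_closure hJ hy
  obtain ⟨l, hl, -, rfl⟩ := h.exists_sublist hred rfl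
  exact cs.wordProd_mem_closure fun i hi => hω i (hl.subset hi)

theorem bruhatChainLE_of_forall_isLeftDescent (hJ : J ⊆ Set.range cs.simple) {u v : W}
    (hv : ∀ i, σ i ∈ J → cs.IsLeftDescent v i) (hu : u ∈ Subgroup.closure J) :
    cs.BruhatChainLE u v := by
  obtain ⟨ω, hω, rfl⟩ := cs.exists_word_of_mem_closure hJ hu
  induction ω with
  | nil =>
    obtain ⟨ωv, hωv, rfl⟩ := cs.exists_isReduced v
    exact cs.bruhatChainLE_of_sublist hωv (List.nil_sublist ωv)
  | cons i ω ih =>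
    have hdesc := cs.isBruhatStep_of_isLeftDescent (hv i (hω i (by simp)))
    rw [wordProd_cons]
    rcases (ih (fun k hk => hω k (by simp [hk])) (cs.wordProd_mem_closure
      fun k hk => hω k (by simp [hk]))).simple_mul_or i with h | h
    · exact h
    · exact h.tail hdesc

end Parabolic

section Longest

variable {cs} {J : Set W} {w₀ : W}

theorem _root_.IsLongestOf.isLeftDescent (hw : IsLongestOf cs J w₀) {i : B} (hi : σ i ∈ J) :
    cs.IsLeftDescent w₀ i :=
  lt_of_le_of_ne (hw.2 _ (Subgroup.mul_mem _ (Subgroup.subset_closure hi) hw.1))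
    (cs.length_simple_mul_ne w₀ i)

theorem _root_.IsLongestOf.eq_of_forall_isLeftDescent (hJ : J ⊆ Set.range cs.simple)
    (hw : IsLongestOf cs J w₀) {v : W} (hv : v ∈ Subgroup.closure J)
    (hdesc : ∀ i, σ i ∈ J → cs.IsLeftDescent v i) : v = w₀ :=
  ((bruhatChainLE_of_forall_isLeftDescent hJ hdesc hw.1).eq_of_length_le (hw.2 v hv)).symm

theorem _root_.IsLongestOf.unique (hJ : J ⊆ Set.range cs.simple) (hw : IsLongestOf cs J w₀)
    {w₁ : W} (hw₁ : IsLongestOf cs J w₁) : w₁ = w₀ :=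
  hw.eq_of_forall_isLeftDescent hJ hw₁.1 fun _ hi => hw₁.isLeftDescent hi

theorem _root_.IsLongestOf.inv_eq (hJ : J ⊆ Set.range cs.simple) (hw : IsLongestOf cs J w₀) :
    w₀⁻¹ = w₀ :=
  hw.unique hJ ⟨inv_mem hw.1, fun v hv => (cs.length_inv w₀).symm ▸ hw.2 v hv⟩

theorem _root_.IsLongestOf.mul_self (hJ : J ⊆ Set.range cs.simple) (hw : IsLongestOf cs J w₀) :
    w₀ * w₀ = 1 := by
  nth_rw 1 [← hw.inv_eq hJ, inv_mul_cancel]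

theorem _root_.IsLongestOf.length_mul_right_add (hJ : J ⊆ Set.range cs.simple)
    (hw : IsLongestOf cs J w₀) {z : W} (hz : z ∈ Subgroup.closure J) :
    ℓ (z * w₀) + ℓ z = ℓ w₀ := by
  induction hn : ℓ w₀ - ℓ z using Nat.strong_induction_on generalizing z with
  | _ n ih =>
    by_cases hzw : z = w₀
    · rw [hzw, hw.mul_self hJ, length_one, zero_add]
    obtain ⟨i, hi, hasc⟩ : ∃ i, σ i ∈ J ∧ ℓ z < ℓ (σ i * z) := by
      by_contra! h
      exact hzw (hw.eq_of_forall_isLeftDescent hJ hz fun i hi =>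
        lt_of_le_of_ne (h i hi) (cs.length_simple_mul_ne z i))
    have hiz : σ i * z ∈ Subgroup.closure J :=
      Subgroup.mul_mem _ (Subgroup.subset_closure hi) hz
    have hiz_len := hw.2 _ hiz
    have hsucc := ih _ (by omega) hiz rfl
    have hupper := cs.length_mul_le (σ i) (σ i * z * w₀)
    have hlower := cs.length_mul_le z⁻¹ (z * w₀)
    rw [← mul_assoc, ← mul_assoc, simple_mul_simple_self, one_mul, length_simple] at hupper
    rw [inv_mul_cancel_left, length_inv] at hlower
    have := cs.length_simple_mul z i
    omega

theorem _root_.IsLongestOf.length_mul_left_add (hJ : J ⊆ Set.range cs.simple)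
    (hw : IsLongestOf cs J w₀) {z : W} (hz : z ∈ Subgroup.closure J) :
    ℓ (w₀ * z) + ℓ z = ℓ w₀ := by
  rw [← length_inv, mul_inv_rev, hw.inv_eq hJ, ← cs.length_inv z]
  exact hw.length_mul_right_add hJ (inv_mem hz)

theorem _root_.IsLongestOf.length_conj (hJ : J ⊆ Set.range cs.simple)
    (hw : IsLongestOf cs J w₀) {z : W} (hz : z ∈ Subgroup.closure J) :
    ℓ (w₀ * z * w₀) = ℓ z := by
  have h₁ := hw.length_mul_right_add hJ hz
  have h₂ := hw.length_mul_left_add hJ (Subgroup.mul_mem _ hz hw.1)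
  rw [← mul_assoc] at h₂
  omega

theorem _root_.IsLongestOf.conj_mem (hJ : J ⊆ Set.range cs.simple)
    (hw : IsLongestOf cs J w₀) {s : W} (hs : s ∈ J) : w₀ * s * w₀ ∈ J := by
  obtain ⟨i, rfl⟩ := hJ hs
  have hmem : w₀ * σ i * w₀ ∈ Subgroup.closure J :=
    Subgroup.mul_mem _ (Subgroup.mul_mem _ hw.1 (Subgroup.subset_closure hs)) hw.1
  obtain ⟨k, hk⟩ := cs.length_eq_one_iff.mp
    ((hw.length_conj hJ (Subgroup.subset_closure hs)).trans (cs.length_simple i))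
  rw [hk] at hmem ⊢
  exact cs.simple_mem_of_mem_closure hJ hmem

theorem _root_.IsLongestOf.bruhatChainLE_mul (hJ : J ⊆ Set.range cs.simple)
    (hw : IsLongestOf cs J w₀) {x y : W} (hy : y ∈ Subgroup.closure J)
    (h : cs.BruhatChainLE x y) : cs.BruhatChainLE (w₀ * y) (w₀ * x) := by
  induction h with
  | refl => exact Relation.ReflTransGen.refl
  | @tail b c hxb hbc ih =>
    have hb := BruhatChainLE.mem_closure hJ (Relation.ReflTransGen.single hbc) hy
    refine Relation.ReflTransGen.head ⟨?_, ?_⟩ (ih hb)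
    · simpa using hbc.1.isReflection_inv
    · have := hw.length_mul_left_add hJ hb
      have := hw.length_mul_left_add hJ hy
      have := hbc.2
      omega

end Longest

section MinimalCosetRepresentatives

variable {cs} {K : Set W}

theorem length_mul_eq_add_of_minimal (hK : K ⊆ Set.range cs.simple) {u : W}
    (hu : ∀ v ∈ Subgroup.closure K, ℓ u ≤ ℓ (v * u)) {v : W} (hv : v ∈ Subgroup.closure K) :
    ℓ (v * u) = ℓ v + ℓ u := by
  obtain ⟨ω, hωK, hω, rfl⟩ := cs.exists_isReduced_of_mem_closure hK hv
  obtain ⟨ωu, hωu, rfl⟩ := cs.exists_isReduced u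
  rw [hω.eq, hωu.eq, ← wordProd_append]
  clear hv
  induction ω with
  | nil => simp [hωu.eq]
  | cons i ω ih =>
    have hred : cs.IsReduced ω := by simpa using hω.drop 1
    have hiK : σ i ∈ K := hωK i (by simp)
    have hωK' : ∀ k ∈ ω, σ k ∈ K := fun k hk => hωK k (by simp [hk])
    have ih := ih hωK' hred
    rw [List.cons_append, wordProd_cons]
    -- An exchange in the reduced word `ω ++ ωu` would either shorten `σ i * π ω`, or produce an
    -- element of `W_K u` shorter than `u`.
    suffices ¬ ℓ (σ i * π (ω ++ ωu)) < ℓ (π (ω ++ ωu)) by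
      have := cs.length_simple_mul (π (ω ++ ωu)) i
      simp only [List.length_cons] at ih ⊢
      omega
    intro hlt
    obtain ⟨l, hl, hlen, hπ⟩ :=
      cs.exists_sublist_of_isLeftInversion ⟨cs.isReflection_simple i, hlt⟩
    obtain ⟨r₁, r₂, rfl, hr₁, hr₂⟩ := List.sublist_append_iff.mp hl
    simp only [List.length_append] at hlen
    rw [wordProd_append, wordProd_append] at hπ
    by_cases hr₂len : r₂.length < ωu.length
    · have hmem : (π r₁)⁻¹ * σ i * π ω ∈ Subgroup.closure K :=
        Subgroup.mul_mem _ (Subgroup.mul_mem _ (inv_mem (cs.wordProd_mem_closure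
          fun k hk => hωK' k (hr₁.subset hk))) (Subgroup.subset_closure hiK))
          (cs.wordProd_mem_closure hωK')
      have := hu _ hmem
      rw [mul_assoc, mul_assoc, ← hπ, inv_mul_cancel_left] at this
      have := cs.length_wordProd_le r₂
      rw [hωu.eq] at *
      omega
    · rw [hr₂.eq_of_length (by have := hr₂.length_le; omega), ← mul_assoc] at hπ
      have h₁ := mul_right_cancel hπ
      have h₂ := hω.eq
      have h₃ := cs.length_wordProd_le r₁
      rw [wordProd_cons, ← h₁] at h₂
      simp only [List.length_cons] at h₂
      omega

theorem BruhatChainLE.mul_left_of_length_mul_eq_add {x y v : W} (h : cs.BruhatChainLE x y)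
    (hv : ℓ (v * y) = ℓ v + ℓ y) : cs.BruhatChainLE (v * x) (v * y) := by
  obtain ⟨ωv, hωv, rfl⟩ := cs.exists_isReduced v
  obtain ⟨ωy, hωy, rfl⟩ := cs.exists_isReduced y
  obtain ⟨l, hl, -, rfl⟩ := h.exists_sublist hωy rfl
  have hred : cs.IsReduced (ωv ++ ωy) := by
    rw [IsReduced, wordProd_append, hv, hωv.eq, hωy.eq, List.length_append]
  simpa only [wordProd_append] using
    cs.bruhatChainLE_of_sublist hred (hl.append_left ωv)

end MinimalCosetRepresentatives

section ConjugateParabolic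

variable {cs} {J K : Set W} {wJ wK : W}

theorem _root_.IsLongestOf.image_conj_subset (hJ : J ⊆ Set.range cs.simple) (hK : K ⊆ J)
    (hwJ : IsLongestOf cs J wJ) : (fun s => wJ * s * wJ) '' K ⊆ J := by
  rintro _ ⟨s, hs, rfl⟩
  exact hwJ.conj_mem hJ (hK hs)

theorem _root_.IsLongestOf.image_conj_image_conj (hJ : J ⊆ Set.range cs.simple)
    (hwJ : IsLongestOf cs J wJ) :
    (fun s => wJ * s * wJ) '' ((fun s => wJ * s * wJ) '' K) = K := by
  rw [Set.image_image]
  convert Set.image_id K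
  have := hwJ.mul_self hJ
  simp [← mul_assoc, this, mul_assoc _ wJ wJ]

theorem _root_.IsLongestOf.conj (hwK : IsLongestOf cs K wK) (hJ : J ⊆ Set.range cs.simple)
    (hK : K ⊆ J) (hwJ : IsLongestOf cs J wJ) :
    IsLongestOf cs ((fun s => wJ * s * wJ) '' K) (wJ * wK * wJ) := by
  have hKJ := Subgroup.closure_mono hK
  rw [IsLongestOf, Subgroup.closure_image_mul_mul_of_mul_self_eq_one (hwJ.mul_self hJ)]
  refine ⟨⟨wK, hwK.1, by simp [(hwJ.inv_eq hJ)]⟩, ?_⟩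
  rintro _ ⟨v, hv, rfl⟩
  simpa [hwJ.inv_eq hJ, hwJ.length_conj hJ (hKJ hv), hwJ.length_conj hJ (hKJ hwK.1)]
    using hwK.2 v hv

theorem _root_.IsLongestOf.mul_mul_mem_minRepsIn (hJ : J ⊆ Set.range cs.simple) (hK : K ⊆ J)
    (hwJ : IsLongestOf cs J wJ) (hwK : IsLongestOf cs K wK) {u : W}
    (hu : u ∈ minRepsIn cs J K) :
    wJ * wK * u ∈ minRepsIn cs J ((fun s => wJ * s * wJ) '' K) := by
  have hKJ := Subgroup.closure_mono hK
  have hKs : K ⊆ Set.range cs.simple := hK.trans hJ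
  refine ⟨Subgroup.mul_mem _ (Subgroup.mul_mem _ hwJ.1 (hKJ hwK.1)) hu.1, ?_⟩
  rw [Subgroup.closure_image_mul_mul_of_mul_self_eq_one (hwJ.mul_self hJ)]
  rintro _ ⟨v, hv, rfl⟩
  have hvwK : v * wK ∈ Subgroup.closure K := Subgroup.mul_mem _ hv hwK.1
  have h₁ := hwJ.length_mul_left_add hJ (Subgroup.mul_mem _ (hKJ hvwK) hu.1)
  have h₂ := hwJ.length_mul_left_add hJ (Subgroup.mul_mem _ (hKJ hwK.1) hu.1)
  have h₃ := length_mul_eq_add_of_minimal hKs hu.2 hvwK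
  have h₄ := length_mul_eq_add_of_minimal hKs hu.2 hwK.1
  have h₅ := hwK.2 _ hvwK
  have heq : (MulAut.conj wJ).toMonoidHom v * (wJ * wK * u) = wJ * (v * wK * u) := by
    simp [hwJ.inv_eq hJ, mul_assoc, ← mul_assoc wJ wJ, hwJ.mul_self hJ]
  rw [heq, mul_assoc wJ wK]
  omega

theorem _root_.IsLongestOf.bruhatChainLE_mul_mul (hJ : J ⊆ Set.range cs.simple) (hK : K ⊆ J)
    (hwJ : IsLongestOf cs J wJ) (hwK : IsLongestOf cs K wK) {u u' : W}
    (hu' : u' ∈ minRepsIn cs J K) (h : cs.BruhatChainLE u u') :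
    cs.BruhatChainLE (wJ * wK * u') (wJ * wK * u) := by
  have hmem := Subgroup.mul_mem _ (Subgroup.closure_mono hK hwK.1) hu'.1
  simpa only [mul_assoc] using hwJ.bruhatChainLE_mul hJ hmem
    (h.mul_left_of_length_mul_eq_add (length_mul_eq_add_of_minimal (hK.trans hJ) hu'.2 hwK.1))

end ConjugateParabolic

end CoxeterSystem

theorem stmt_10_general (cs : CoxeterSystem M W)
    (J K : Set W) (hJ : J ⊆ Set.range cs.simple) (hK : K ⊆ J)
    (wJ0 : W) (hwJ0 : IsLongestOf cs J wJ0)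
    (wK0 : W) (hwK0 : IsLongestOf cs K wK0)
    (K' : Set W) (hK' : K' = (fun s => wJ0 * s * wJ0) '' K) :
    Set.BijOn (fun u => wJ0 * wK0 * u) (minRepsIn cs J K) (minRepsIn cs J K') ∧
      ∀ u ∈ minRepsIn cs J K, ∀ u' ∈ minRepsIn cs J K,
        (BruhatLE cs u u' ↔ BruhatLE cs (wJ0 * wK0 * u') (wJ0 * wK0 * u)) := by
  subst hK'
  have hK'J := hwJ0.image_conj_subset hJ hK
  have hwK'0 := hwK0.conj hJ hK hwJ0
  have hinv : wJ0 * (wJ0 * wK0 * wJ0) = (wJ0 * wK0)⁻¹ := by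
    rw [mul_inv_rev, hwK0.inv_eq (hK.trans hJ), hwJ0.inv_eq hJ, ← mul_assoc, ← mul_assoc,
      hwJ0.mul_self hJ, one_mul]
  have hmaps : Set.MapsTo (fun u => wJ0 * wK0 * u) (minRepsIn cs J K)
      (minRepsIn cs J ((fun s => wJ0 * s * wJ0) '' K)) :=
    fun u hu => hwJ0.mul_mul_mem_minRepsIn hJ hK hwK0 hu
  have hmaps' : Set.MapsTo (fun u => (wJ0 * wK0)⁻¹ * u)
      (minRepsIn cs J ((fun s => wJ0 * s * wJ0) '' K)) (minRepsIn cs J K) := by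
    intro u hu
    simpa only [hwJ0.image_conj_image_conj hJ, hinv] using
      hwJ0.mul_mul_mem_minRepsIn hJ hK'J hwK'0 hu
  refine ⟨Set.InvOn.bijOn ⟨fun u _ => inv_mul_cancel_left _ u, fun u _ => mul_inv_cancel_left _ u⟩
    hmaps hmaps', fun u hu u' hu' => ?_⟩
  rw [cs.bruhatLE_iff_bruhatChainLE, cs.bruhatLE_iff_bruhatChainLE]
  refine ⟨hwJ0.bruhatChainLE_mul_mul hJ hK hwK0 hu', fun h => ?_⟩
  simpa only [hinv, inv_mul_cancel_left] using
    hwJ0.bruhatChainLE_mul_mul hJ hK'J hwK'0 (hmaps hu) h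

/-- Let `(W, S)` be a finite Coxeter system, `K ⊆ J ⊆ S` and `K' := w_{J,0} K w_{J,0}`.
Then the map `u ↦ w_{J,0} w_{K,0} u` is a bijection from `ᴷW_J` onto `ᴷ'W_J` which
reverses the Bruhat order. -/
theorem stmt_10 [Finite W] (cs : CoxeterSystem M W)
    (J K : Set W) (hJ : J ⊆ Set.range cs.simple) (hK : K ⊆ J)
    (wJ0 : W) (hwJ0 : IsLongestOf cs J wJ0)
    (wK0 : W) (hwK0 : IsLongestOf cs K wK0)
    (K' : Set W) (hK' : K' = (fun s => wJ0 * s * wJ0) '' K) :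
    Set.BijOn (fun u => wJ0 * wK0 * u) (minRepsIn cs J K) (minRepsIn cs J K') ∧
      ∀ u ∈ minRepsIn cs J K, ∀ u' ∈ minRepsIn cs J K,
        (BruhatLE cs u u' ↔ BruhatLE cs (wJ0 * wK0 * u') (wJ0 * wK0 * u)) :=
  stmt_10_general cs J K hJ hK wJ0 hwJ0 wK0 hwK0 K' hK'
end

section
/- Let I ⊆ S and set I' := w_0 I w_0 ⊆ S. Then for every v ∈ W_{I'} and every w ∈ ᴵW, one has ℓ(v · w_0 w_{I,0} · w) = ℓ(v) + ℓ(w_0 w_{I,0} w). In particular, w_0 w_{I,0} w ∈ ᴵ'W for every w ∈ ᴵW. -/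
variable {B W : Type*} [Group W] {M : CoxeterMatrix B}

/-- `ᴵW`: the elements of minimal length in their right coset `W_I w`,
where `W_I` is the standard parabolic subgroup generated by `I`. -/
def minRight (cs : CoxeterSystem M W) (I : Set W) : Set W :=
  {w | ∀ v ∈ Subgroup.closure I, cs.length w ≤ cs.length (v * w)}

section Aux

open CoxeterSystem List

variable (cs : CoxeterSystem M W) [DecidableEq W]

/-- The function underlying the sign permutation attached to a simple reflection. -/
def cxSigFun (i : B) : W × ℤˣ → W × ℤˣ :=
  fun p => (cs.simple i * p.1 * cs.simple i, if p.1 = cs.simple i then -p.2 else p.2)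

theorem cxSigFun_involutive (i : B) : Function.Involutive (cxSigFun cs i) := by
  rintro ⟨t, e⟩
  unfold cxSigFun
  simp only
  by_cases h : t = cs.simple i
  · rw [if_pos h, h]
    simp [mul_assoc, cs.simple_mul_simple_cancel_left, cs.simple_mul_simple_self]
  · have h2 : cs.simple i * t * cs.simple i ≠ cs.simple i := by
      intro hc
      apply h
      have h3 := congrArg (fun x => cs.simple i * x * cs.simple i) hc
      simpa [mul_assoc, cs.simple_mul_simple_cancel_left,
        cs.simple_mul_simple_self] using h3
    rw [if_neg h, if_neg h2]
    refine Prod.ext ?_ rfl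
    simp [mul_assoc, cs.simple_mul_simple_cancel_left, cs.simple_mul_simple_self]

/-- The sign permutation attached to a simple reflection. -/
def cxSig (i : B) : Equiv.Perm (W × ℤˣ) := (cxSigFun_involutive cs i).toPerm

theorem cxSig_apply (i : B) (p : W × ℤˣ) :
    cxSig cs i p = (cs.simple i * p.1 * cs.simple i,
      if p.1 = cs.simple i then -p.2 else p.2) := rfl

theorem cxSig_liftable : CoxeterMatrix.IsLiftable M (cxSig cs) := by
  intro i j
  set c : W := cs.simple i * cs.simple j with hc
  have hcm : c ^ M i j = 1 := cs.simple_mul_simple_pow i j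
  set q : ℕ → W := fun n => (c ^ n)⁻¹ * cs.simple j with hqdef
  have hjc : cs.simple j * c = c⁻¹ * cs.simple j := by
    rw [hc, mul_inv_rev, cs.inv_simple, cs.inv_simple, ← mul_assoc]
  have hshift : ∀ n, c⁻¹ * q n * c = q (n + 2) := by
    intro n
    show c⁻¹ * ((c ^ n)⁻¹ * cs.simple j) * c = (c ^ (n + 2))⁻¹ * cs.simple j
    calc c⁻¹ * ((c ^ n)⁻¹ * cs.simple j) * c
        = (c⁻¹ * (c ^ n)⁻¹) * (cs.simple j * c) := by group
      _ = (c⁻¹ * (c ^ n)⁻¹) * (c⁻¹ * cs.simple j) := by rw [hjc]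
      _ = (c ^ (n + 2))⁻¹ * cs.simple j := by group
  have key : ∀ (k : ℕ) (p : W × ℤˣ),
      ((cxSig cs i * cxSig cs j) ^ k) p =
        (c ^ k * p.1 * (c ^ k)⁻¹,
         (∏ n ∈ Finset.range (2 * k), (if p.1 = q n then (-1 : ℤˣ) else 1)) * p.2) := by
    intro k
    induction k with
    | zero => intro p; simp
    | succ k ih =>
      intro p
      rw [pow_succ, Equiv.Perm.mul_apply]
      have hq0 : q 0 = cs.simple j := by simp [hqdef]
      have hq1 : q 1 = cs.simple j * cs.simple i * cs.simple j := by
        rw [hqdef]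
        simp only [pow_one, hc, mul_inv_rev, cs.inv_simple, mul_assoc]
      have hp : (cxSig cs i * cxSig cs j) p
          = (c * p.1 * c⁻¹,
             (if p.1 = q 1 then (-1:ℤˣ) else 1) * ((if p.1 = q 0 then (-1:ℤˣ) else 1) * p.2)) := by
        rw [Equiv.Perm.mul_apply, cxSig_apply, cxSig_apply]
        refine Prod.ext ?_ ?_
        · show cs.simple i * (cs.simple j * p.1 * cs.simple j) * cs.simple i
            = c * p.1 * c⁻¹
          rw [hc, mul_inv_rev, cs.inv_simple, cs.inv_simple]
          group
        · show (if cs.simple j * p.1 * cs.simple j = cs.simple i then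
              -(if p.1 = cs.simple j then -p.2 else p.2) else
              (if p.1 = cs.simple j then -p.2 else p.2)) = _
          have hcond : (cs.simple j * p.1 * cs.simple j = cs.simple i) ↔ (p.1 = q 1) := by
            rw [hq1]
            constructor
            · intro h
              have := congrArg (fun x => cs.simple j * x * cs.simple j) h
              simpa [mul_assoc, cs.simple_mul_simple_cancel_left,
                cs.simple_mul_simple_self] using this
            · intro h
              rw [h]
              simp [mul_assoc, cs.simple_mul_simple_cancel_left,
                cs.simple_mul_simple_self]
          rw [if_congr hcond rfl rfl, hq0]
          by_cases h1 : p.1 = q 1 <;> by_cases h0 : p.1 = cs.simple j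
          · have e : q 1 = cs.simple j := by rw [← h1]; exact h0
            simp [h1, h0, e]
          · have e : ¬ q 1 = cs.simple j := by rw [← h1]; exact h0
            simp [h1, h0, e]
          · have e : ¬ cs.simple j = q 1 := by rw [← h0]; exact h1
            simp [h1, h0, e]
          · simp [h1, h0]
      rw [hp, ih]
      refine Prod.ext ?_ ?_
      · show c ^ k * (c * p.1 * c⁻¹) * (c ^ k)⁻¹ = c ^ (k + 1) * p.1 * (c ^ (k + 1))⁻¹
        group
      · show (∏ n ∈ Finset.range (2 * k), (if c * p.1 * c⁻¹ = q n then (-1 : ℤˣ) else 1)) *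
            ((if p.1 = q 1 then (-1:ℤˣ) else 1) * ((if p.1 = q 0 then (-1:ℤˣ) else 1) * p.2))
            = (∏ n ∈ Finset.range (2 * (k + 1)), (if p.1 = q n then (-1 : ℤˣ) else 1)) * p.2
        have hcond : ∀ n, (c * p.1 * c⁻¹ = q n) ↔ (p.1 = q (n + 2)) := by
          intro n
          rw [← hshift n]
          constructor
          · intro h; rw [← h]; group
          · intro h
            have h5 := congrArg (fun x => c * x * c⁻¹) h
            rw [h5]; group
        have hprod : (∏ n ∈ Finset.range (2 * k),
              (if c * p.1 * c⁻¹ = q n then (-1 : ℤˣ) else 1))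
            = ∏ n ∈ Finset.range (2 * k), (if p.1 = q (n + 2) then (-1 : ℤˣ) else 1) :=
          Finset.prod_congr rfl (fun n _ => if_congr (hcond n) rfl rfl)
        rw [hprod]
        have h2k : 2 * (k + 1) = (2 * k + 1) + 1 := by ring
        rw [h2k, Finset.prod_range_succ' (fun n => if p.1 = q n then (-1 : ℤˣ) else 1),
          Finset.prod_range_succ' (fun n => if p.1 = q (n + 1) then (-1 : ℤˣ) else 1)]
        simp only [zero_add]
        rw [mul_assoc, mul_assoc]
  apply Equiv.ext
  intro p
  rw [key (M i j) p, hcm]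
  have hqm : ∀ n, q (M i j + n) = q n := by
    intro n
    rw [hqdef]
    simp [pow_add, hcm]
  rw [two_mul, Finset.prod_range_add]
  have hprod2 : (∏ n ∈ Finset.range (M i j),
        (if p.1 = q (M i j + n) then (-1 : ℤˣ) else 1))
      = ∏ n ∈ Finset.range (M i j), (if p.1 = q n then (-1 : ℤˣ) else 1) :=
    Finset.prod_congr rfl (fun n _ => by rw [hqm n])
  rw [hprod2, ← Finset.prod_mul_distrib]
  have hprod3 : (∏ n ∈ Finset.range (M i j),
        ((if p.1 = q n then (-1 : ℤˣ) else 1) * (if p.1 = q n then (-1 : ℤˣ) else 1)))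
      = ∏ n ∈ Finset.range (M i j), (1 : ℤˣ) :=
    Finset.prod_congr rfl (fun n _ => by by_cases h : p.1 = q n <;> simp [h])
  rw [hprod3]
  simp

/-- The sign representation of the Coxeter group. -/
def cxRho : W →* Equiv.Perm (W × ℤˣ) := cs.lift ⟨cxSig cs, cxSig_liftable cs⟩

theorem cxRho_simple (i : B) : cxRho cs (cs.simple i) = cxSig cs i :=
  cs.lift_apply_simple (cxSig_liftable cs) i

/-- The sign of `t` in a list of group elements. -/
def cxSign (t : W) (l : List W) : ℤˣ :=
  (l.map (fun x => if x = t then (-1 : ℤˣ) else 1)).prod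

theorem cxSign_cons (t x : W) (l : List W) :
    cxSign t (x :: l) = (if x = t then (-1 : ℤˣ) else 1) * cxSign t l := by
  simp [cxSign]

theorem cxSign_eq_one_of_notMem (t : W) {l : List W} (h : t ∉ l) : cxSign t l = 1 := by
  unfold cxSign
  apply List.prod_eq_one
  intro x hx
  obtain ⟨a, ha, rfl⟩ := List.mem_map.mp hx
  rw [if_neg]
  intro e
  exact h (e ▸ ha)

theorem cxRho_wordProd (ω : List B) (p : W × ℤˣ) :
    cxRho cs (cs.wordProd ω) p
      = (cs.wordProd ω * p.1 * (cs.wordProd ω)⁻¹,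
         cxSign p.1 (cs.rightInvSeq ω) * p.2) := by
  induction ω generalizing p with
  | nil => simp [cxSign]
  | cons i ω ih =>
    rw [cs.wordProd_cons, map_mul, Equiv.Perm.mul_apply, ih p, cxRho_simple, cxSig_apply]
    have hris : cs.rightInvSeq (i :: ω)
        = ((cs.wordProd ω)⁻¹ * cs.simple i * cs.wordProd ω) :: cs.rightInvSeq ω := rfl
    rw [hris, cxSign_cons]
    refine Prod.ext ?_ ?_
    · show cs.simple i * (cs.wordProd ω * p.1 * (cs.wordProd ω)⁻¹) * cs.simple i
        = (cs.simple i * cs.wordProd ω) * p.1 * (cs.simple i * cs.wordProd ω)⁻¹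
      rw [mul_inv_rev, cs.inv_simple]
      group
    · show (if cs.wordProd ω * p.1 * (cs.wordProd ω)⁻¹ = cs.simple i
          then -(cxSign p.1 (cs.rightInvSeq ω) * p.2)
          else cxSign p.1 (cs.rightInvSeq ω) * p.2)
        = ((if (cs.wordProd ω)⁻¹ * cs.simple i * cs.wordProd ω = p.1 then (-1 : ℤˣ) else 1) *
            cxSign p.1 (cs.rightInvSeq ω)) * p.2
      have hcond : (cs.wordProd ω * p.1 * (cs.wordProd ω)⁻¹ = cs.simple i)
          ↔ ((cs.wordProd ω)⁻¹ * cs.simple i * cs.wordProd ω = p.1) := by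
        constructor
        · intro h; rw [← h]; group
        · intro h; rw [← h]; group
      rw [if_congr hcond rfl rfl]
      by_cases h : (cs.wordProd ω)⁻¹ * cs.simple i * cs.wordProd ω = p.1
      · simp [h, mul_assoc]
      · simp [h]

/-- The sign character `η(w, t)`. -/
def cxEta (w t : W) : ℤˣ := (cxRho cs w (t, 1)).2

theorem cxEta_wordProd (ω : List B) (t : W) :
    cxEta cs (cs.wordProd ω) t = cxSign t (cs.rightInvSeq ω) := by
  unfold cxEta
  rw [cxRho_wordProd]
  simp

theorem cxRho_apply (w : W) (p : W × ℤˣ) :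
    cxRho cs w p = (w * p.1 * w⁻¹, cxEta cs w p.1 * p.2) := by
  obtain ⟨ω, rfl⟩ := cs.wordProd_surjective w
  rw [cxRho_wordProd, cxEta_wordProd]

theorem cxEta_one (t : W) : cxEta cs 1 t = 1 := by
  unfold cxEta
  simp

theorem cxEta_mul (u v t : W) :
    cxEta cs (u * v) t = cxEta cs u (v * t * v⁻¹) * cxEta cs v t := by
  unfold cxEta
  rw [map_mul, Equiv.Perm.mul_apply]
  simp [cxRho_apply]

theorem cxEta_simple (i : B) (t : W) :
    cxEta cs (cs.simple i) t = if t = cs.simple i then -1 else 1 := by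
  unfold cxEta
  rw [cxRho_simple, cxSig_apply]

theorem cxEta_refl_self {t : W} (ht : cs.IsReflection t) : cxEta cs t t = -1 := by
  obtain ⟨v, i, rfl⟩ := ht
  have key1 : v * cs.simple i * v⁻¹ = v * (cs.simple i * v⁻¹) := by rw [mul_assoc]
  rw [key1, cxEta_mul]
  have e1 : (cs.simple i * v⁻¹) * (v * (cs.simple i * v⁻¹)) * (cs.simple i * v⁻¹)⁻¹
      = cs.simple i := by
    rw [mul_inv_rev, cs.inv_simple]
    simp [mul_assoc, cs.simple_mul_simple_self]
  rw [e1, cxEta_mul]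
  have e2 : v⁻¹ * (v * (cs.simple i * v⁻¹)) * v⁻¹⁻¹ = cs.simple i := by
    simp [mul_assoc]
  rw [e2, cxEta_simple, if_pos rfl]
  have e3 : cxEta cs v⁻¹ (v * (cs.simple i * v⁻¹)) * cxEta cs v (cs.simple i) = 1 := by
    have h0 : cxEta cs (v⁻¹ * v) (cs.simple i) = 1 := by
      rw [inv_mul_cancel]; exact cxEta_one cs _
    rw [cxEta_mul] at h0
    rw [mul_assoc] at h0
    exact h0
  rw [mul_comm, mul_assoc, e3, mul_one]

theorem cxIsRightInversion_of_eta {w t : W} (h : cxEta cs w t = -1) :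
    cs.IsRightInversion w t := by
  obtain ⟨ω, hred, rfl⟩ := cs.exists_reduced_word' w
  rw [cxEta_wordProd] at h
  have hmem : t ∈ cs.rightInvSeq ω := by
    by_contra hn
    rw [cxSign_eq_one_of_notMem t hn] at h
    exact absurd h (by decide)
  exact cs.isRightInversion_of_mem_rightInvSeq hred hmem

theorem cxEta_of_isRightInversion {w t : W} (h : cs.IsRightInversion w t) :
    cxEta cs w t = -1 := by
  have ht := h.1
  have key : cxEta cs w t = cxEta cs (w * t) t * -1 := by
    have h1 : w = (w * t) * t := by rw [mul_assoc, ht.mul_self, mul_one]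
    conv_lhs => rw [h1]
    rw [cxEta_mul]
    have h2 : t * t * t⁻¹ = t := by rw [ht.mul_self, one_mul, ht.inv]
    rw [h2, cxEta_refl_self cs ht]
  rcases Int.units_eq_one_or (cxEta cs (w * t) t) with he | he
  · rw [key, he]; rfl
  · exfalso
    have h2 := cxIsRightInversion_of_eta cs he
    have h3 : w * t * t = w := by rw [mul_assoc, ht.mul_self, mul_one]
    have h4 := h2.2
    rw [h3] at h4
    have h5 := h.2
    omega

theorem cxIsRightInversion_iff (w t : W) :
    cs.IsRightInversion w t ↔ cs.IsReflection t ∧ cxEta cs w t = -1 :=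
  ⟨fun h => ⟨h.1, cxEta_of_isRightInversion cs h⟩, fun h => cxIsRightInversion_of_eta cs h.2⟩

theorem cxLength_eq_ncard [Finite W] (w : W) :
    cs.length w = {t | cs.IsRightInversion w t}.ncard := by
  obtain ⟨ω, hred, rfl⟩ := cs.exists_reduced_word' w
  have hset : {t | cs.IsRightInversion (cs.wordProd ω) t}
      = ((cs.rightInvSeq ω).toFinset : Set W) := by
    ext t
    simp only [Set.mem_setOf_eq, Finset.coe_sort_coe, List.coe_toFinset, Set.mem_setOf_eq]
    constructor
    · intro h
      have h2 := cxEta_of_isRightInversion cs h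
      rw [cxEta_wordProd] at h2
      by_contra hn
      rw [cxSign_eq_one_of_notMem t hn] at h2
      exact absurd h2 (by decide)
    · intro h
      exact cs.isRightInversion_of_mem_rightInvSeq hred h
  rw [hset, Set.ncard_coe_finset, List.toFinset_card_of_nodup hred.nodup_rightInvSeq,
    cs.length_rightInvSeq, hred]

theorem cxExists_word {I : Set W} (hI : I ⊆ Set.range cs.simple) {u : W}
    (hu : u ∈ Subgroup.closure I) :
    ∃ ω : List B, cs.wordProd ω = u ∧ ∀ i ∈ ω, cs.simple i ∈ I := by
  induction hu using Subgroup.closure_induction with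
  | mem x hx =>
    obtain ⟨i, hi⟩ := hI hx
    refine ⟨[i], by simpa using hi, ?_⟩
    intro j hj
    simp only [List.mem_singleton] at hj
    rw [hj, hi]; exact hx
  | one => exact ⟨[], by simp, by simp⟩
  | mul x y hx hy ihx ihy =>
    obtain ⟨ω1, h1, m1⟩ := ihx
    obtain ⟨ω2, h2, m2⟩ := ihy
    refine ⟨ω1 ++ ω2, by rw [cs.wordProd_append, h1, h2], ?_⟩
    intro j hj
    rcases List.mem_append.mp hj with h | h
    exacts [m1 j h, m2 j h]
  | inv x hx ihx =>
    obtain ⟨ω, h1, m1⟩ := ihx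
    exact ⟨ω.reverse, by rw [cs.wordProd_reverse, h1],
      fun j hj => m1 j (List.mem_reverse.mp hj)⟩

theorem cxWordProd_mem {I : Set W} (ω : List B) (hω : ∀ i ∈ ω, cs.simple i ∈ I) :
    cs.wordProd ω ∈ Subgroup.closure I := by
  induction ω with
  | nil => rw [cs.wordProd_nil]; exact one_mem _
  | cons i ω ih =>
    rw [cs.wordProd_cons]
    exact mul_mem (Subgroup.subset_closure (hω i (by simp)))
      (ih fun j hj => hω j (by simp [hj]))

theorem cxRis_mem {I : Set W} (ω : List B) (hω : ∀ i ∈ ω, cs.simple i ∈ I) :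
    ∀ t ∈ cs.rightInvSeq ω, t ∈ Subgroup.closure I := by
  induction ω with
  | nil => simp
  | cons i ω ih =>
    intro t ht
    have hris : cs.rightInvSeq (i :: ω)
        = ((cs.wordProd ω)⁻¹ * cs.simple i * cs.wordProd ω) :: cs.rightInvSeq ω := rfl
    rw [hris] at ht
    have hωtail : ∀ j ∈ ω, cs.simple j ∈ I := fun j hj => hω j (by simp [hj])
    rcases List.mem_cons.mp ht with h | h
    · rw [h]
      have hm : cs.wordProd ω ∈ Subgroup.closure I := cxWordProd_mem cs ω hωtail
      exact mul_mem (mul_mem (inv_mem hm) (Subgroup.subset_closure (hω i (by simp)))) hm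
    · exact ih hωtail t h

theorem cxEta_mem {I : Set W} (hI : I ⊆ Set.range cs.simple) {u t : W}
    (hu : u ∈ Subgroup.closure I) (h : cxEta cs u t = -1) : t ∈ Subgroup.closure I := by
  obtain ⟨ω, rfl, hmem⟩ := cxExists_word cs hI hu
  rw [cxEta_wordProd] at h
  have hmem2 : t ∈ cs.rightInvSeq ω := by
    by_contra hn
    rw [cxSign_eq_one_of_notMem t hn] at h
    exact absurd h (by decide)
  exact cxRis_mem cs ω hmem t hmem2

theorem cxNcard_conj [Finite W] (u w : W) :
    {t | cs.IsRightInversion u (w * t * w⁻¹)}.ncard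
      = {t | cs.IsRightInversion u t}.ncard := by
  have himg : {t | cs.IsRightInversion u (w * t * w⁻¹)}
      = (fun t => w⁻¹ * t * w) '' {t | cs.IsRightInversion u t} := by
    ext t
    simp only [Set.mem_setOf_eq, Set.mem_image]
    constructor
    · intro h
      exact ⟨w * t * w⁻¹, h, by group⟩
    · rintro ⟨t', h, rfl⟩
      have he : w * (w⁻¹ * t' * w) * w⁻¹ = t' := by group
      rw [he]
      exact h
  rw [himg, Set.ncard_image_of_injective]
  have : (fun t : W => w⁻¹ * t * w) = (· * w) ∘ (w⁻¹ * ·) := rfl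
  rw [this]
  exact Function.Injective.comp (mul_left_injective w) (mul_right_injective w⁻¹)

theorem cxLength_minRight_mul [Finite W] {I : Set W} (hI : I ⊆ Set.range cs.simple)
    {u w : W} (hu : u ∈ Subgroup.closure I)
    (hw : ∀ v ∈ Subgroup.closure I, cs.length w ≤ cs.length (v * w)) :
    cs.length (u * w) = cs.length u + cs.length w := by
  set A := {t | cs.IsRightInversion u (w * t * w⁻¹)} with hA
  set Bs := {t | cs.IsRightInversion w t} with hB
  have hdisj : Disjoint A Bs := by
    rw [Set.disjoint_left]
    intro t ha hb
    have h1 : w * t * w⁻¹ ∈ Subgroup.closure I :=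
      cxEta_mem cs hI hu (cxEta_of_isRightInversion cs ha)
    have h2 := hw _ h1
    have h3 : w * t * w⁻¹ * w = w * t := by group
    rw [h3] at h2
    exact absurd hb.2 (not_lt.mpr h2)
  have hC : {t | cs.IsRightInversion (u * w) t} = A ∪ Bs := by
    ext t
    by_cases hrt : cs.IsReflection t
    · have hrt' : cs.IsReflection (w * t * w⁻¹) := hrt.conj w
      simp only [Set.mem_setOf_eq, Set.mem_union, hA, hB, cxIsRightInversion_iff, cxEta_mul]
      rcases Int.units_eq_one_or (cxEta cs u (w * t * w⁻¹)) with h1 | h1 <;>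
        rcases Int.units_eq_one_or (cxEta cs w t) with h2 | h2
      · simp [h1, h2]
      · simp [h1, h2, hrt]
      · simp [h1, h2, hrt, hrt']
      · exfalso
        have ha : t ∈ A := by
          rw [hA]; exact (cxIsRightInversion_iff cs u (w * t * w⁻¹)).mpr ⟨hrt', h1⟩
        have hb : t ∈ Bs := by
          rw [hB]; exact (cxIsRightInversion_iff cs w t).mpr ⟨hrt, h2⟩
        exact Set.disjoint_left.mp hdisj ha hb
    · have e0 : ¬ cs.IsRightInversion (u * w) t := fun h => hrt h.1
      have e1 : t ∉ A := by
        rw [hA]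
        intro h
        apply hrt
        have h4 := (h.1).conj w⁻¹
        have he : w⁻¹ * (w * t * w⁻¹) * w⁻¹⁻¹ = t := by group
        rwa [he] at h4
      have e2 : t ∉ Bs := fun h => hrt h.1
      simp [e0, e1, e2]
  rw [cxLength_eq_ncard cs (u * w), hC,
    Set.ncard_union_eq hdisj (Set.toFinite A) (Set.toFinite Bs), hA, hB,
    cxNcard_conj cs u w, ← cxLength_eq_ncard, ← cxLength_eq_ncard]

theorem cxLength_longest_mul [Finite W] {I : Set W} (hI : I ⊆ Set.range cs.simple)
    {u m : W} (hu : u ∈ Subgroup.closure I) (hm : m ∈ Subgroup.closure I)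
    (hmax : ∀ v ∈ Subgroup.closure I, cs.length v ≤ cs.length m) :
    cs.length (u * m) + cs.length u = cs.length m := by
  set A := {t | cs.IsRightInversion u (m * t * m⁻¹)} with hA
  set Bs := {t | cs.IsRightInversion m t} with hB
  have hsub : A ⊆ Bs := by
    intro t ha
    rw [hA] at ha
    have hrt' : cs.IsReflection (m * t * m⁻¹) := ha.1
    have h1 : m * t * m⁻¹ ∈ Subgroup.closure I :=
      cxEta_mem cs hI hu (cxEta_of_isRightInversion cs ha)
    have hrt : cs.IsReflection t := by
      have h4 := hrt'.conj m⁻¹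
      have he : m⁻¹ * (m * t * m⁻¹) * m⁻¹⁻¹ = t := by group
      rwa [he] at h4
    rw [hB]
    refine ⟨hrt, ?_⟩
    have he2 : m * t = (m * t * m⁻¹) * m := by group
    have hmem2 : m * t ∈ Subgroup.closure I := by rw [he2]; exact mul_mem h1 hm
    have hle := hmax _ hmem2
    have hne : cs.length (m * t) ≠ cs.length m := by
      rw [he2]; exact hrt'.length_mul_right_ne m
    exact lt_of_le_of_ne hle hne
  have hC : {t | cs.IsRightInversion (u * m) t} = Bs \ A := by
    ext t
    by_cases hrt : cs.IsReflection t
    · have hrt' : cs.IsReflection (m * t * m⁻¹) := hrt.conj m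
      simp only [Set.mem_setOf_eq, Set.mem_diff, hA, hB, cxIsRightInversion_iff, cxEta_mul]
      rcases Int.units_eq_one_or (cxEta cs u (m * t * m⁻¹)) with h1 | h1 <;>
        rcases Int.units_eq_one_or (cxEta cs m t) with h2 | h2
      · simp [h1, h2]
      · simp [h1, h2, hrt]
      · exfalso
        have ha : t ∈ A := by
          rw [hA]; exact (cxIsRightInversion_iff cs u (m * t * m⁻¹)).mpr ⟨hrt', h1⟩
        have hb := hsub ha
        rw [hB] at hb
        have := (cxIsRightInversion_iff cs m t).mp hb
        rw [h2] at this
        exact absurd this.2 (by decide)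
      · simp [h1, h2, hrt']
    · have e0 : ¬ cs.IsRightInversion (u * m) t := fun h => hrt h.1
      have e2 : t ∉ Bs := fun h => hrt h.1
      simp only [Set.mem_setOf_eq, Set.mem_diff, e0, false_iff]
      intro hcon
      exact e2 hcon.1
  have e1 : cs.length (u * m) = Bs.ncard - A.ncard := by
    rw [cxLength_eq_ncard cs (u * m), hC, Set.ncard_diff hsub (Set.toFinite A)]
  have e2 : A.ncard = cs.length u := by
    rw [hA, cxNcard_conj cs u m, ← cxLength_eq_ncard]
  have e3 : Bs.ncard = cs.length m := by
    rw [hB, ← cxLength_eq_ncard]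
  have hle : A.ncard ≤ Bs.ncard := Set.ncard_le_ncard hsub (Set.toFinite Bs)
  omega

theorem cxLength_w0_mul [Finite W] {w₀ : W} (hw₀ : ∀ w : W, cs.length w ≤ cs.length w₀)
    (x : W) : cs.length (w₀ * x) + cs.length x = cs.length w₀ := by
  have htop : ∀ y : W, y ∈ Subgroup.closure (Set.range cs.simple) := by
    intro y; rw [cs.subgroup_closure_range_simple]; trivial
  have hmax' : ∀ v ∈ Subgroup.closure (Set.range cs.simple),
      cs.length v ≤ cs.length w₀⁻¹ := by
    intro v _; rw [cs.length_inv]; exact hw₀ v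
  have h := cxLength_longest_mul cs subset_rfl (htop x⁻¹) (htop w₀⁻¹) hmax'
  rw [← mul_inv_rev, cs.length_inv, cs.length_inv, cs.length_inv] at h
  exact h

end Aux

/-- Let `(W, S)` be a finite Coxeter system with longest element `w₀`, let `I ⊆ S` and set
`I' := w₀ I w₀ ⊆ S`.  Then for every `v ∈ W_{I'}` and every `w ∈ ᴵW`, one has
`ℓ(v ⬝ w₀ w_{I,0} ⬝ w) = ℓ(v) + ℓ(w₀ w_{I,0} w)`.  In particular,
`w₀ w_{I,0} w ∈ ᴵ'W` for every `w ∈ ᴵW`. -/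
theorem stmt_11 [Finite W] (cs : CoxeterSystem M W)
    (I : Set W) (hI : I ⊆ Set.range cs.simple)
    (w₀ : W) (hw₀ : ∀ w : W, cs.length w ≤ cs.length w₀)
    (wI0 : W) (hwI0 : IsLongestOf cs I wI0)
    (I' : Set W) (hI' : I' = (fun s => w₀ * s * w₀) '' I) :
    (∀ v ∈ Subgroup.closure I', ∀ w ∈ minRight cs I,
        cs.length (v * (w₀ * wI0) * w) = cs.length v + cs.length (w₀ * wI0 * w)) ∧
      ∀ w ∈ minRight cs I, w₀ * wI0 * w ∈ minRight cs I' := by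
  classical
  obtain ⟨hm0, hmax0⟩ := hwI0
  have htop : ∀ y : W, y ∈ Subgroup.closure (Set.range cs.simple) := by
    intro y; rw [cs.subgroup_closure_range_simple]; trivial
  have habs : ∀ x : W, cs.length (w₀ * x) + cs.length x = cs.length w₀ :=
    cxLength_w0_mul cs hw₀
  have habs' : ∀ x : W, cs.length (x * w₀) + cs.length x = cs.length w₀ := fun x =>
    cxLength_longest_mul cs subset_rfl (htop x) (htop w₀) (fun v _ => hw₀ v)
  have hsq : w₀ * w₀ = 1 := by
    have h0 := habs w₀
    have h1 : cs.length (w₀ * w₀) = 0 := by omega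
    exact cs.length_eq_zero_iff.mp h1
  have hinv : w₀⁻¹ = w₀ := inv_eq_of_mul_eq_one_right hsq
  have hconj : ∀ v ∈ Subgroup.closure I', w₀ * v * w₀ ∈ Subgroup.closure I := by
    intro v hv
    induction hv using Subgroup.closure_induction with
    | mem x hx =>
      rw [hI'] at hx
      obtain ⟨y, hy, rfl⟩ := hx
      have he : w₀ * (w₀ * y * w₀) * w₀ = y := by
        rw [show w₀ * (w₀ * y * w₀) * w₀ = (w₀ * w₀) * y * (w₀ * w₀) by group, hsq]
        simp
      rw [he]
      exact Subgroup.subset_closure hy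
    | one =>
      rw [mul_one, hsq]; exact one_mem _
    | mul x y hx hy ihx ihy =>
      have he : w₀ * (x * y) * w₀ = (w₀ * x * w₀) * (w₀ * y * w₀) := by
        rw [show (w₀ * x * w₀) * (w₀ * y * w₀) = w₀ * x * (w₀ * w₀) * y * w₀ by group, hsq]
        group
      rw [he]
      exact mul_mem ihx ihy
    | inv x hx ihx =>
      have he : w₀ * x⁻¹ * w₀ = (w₀ * x * w₀)⁻¹ := by
        rw [mul_inv_rev, mul_inv_rev, hinv]; group
      rw [he]
      exact inv_mem ihx
  have main : ∀ v ∈ Subgroup.closure I', ∀ w ∈ minRight cs I,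
      cs.length (v * (w₀ * wI0) * w) = cs.length v + cs.length (w₀ * wI0 * w) := by
    intro v hv w hw
    have hw' : ∀ x ∈ Subgroup.closure I, cs.length w ≤ cs.length (x * w) := hw
    set u : W := w₀ * v * w₀ with hu
    have huG : u ∈ Subgroup.closure I := hconj v hv
    have hveq : v = w₀ * u * w₀ := by
      rw [hu, show w₀ * (w₀ * v * w₀) * w₀ = (w₀ * w₀) * v * (w₀ * w₀) by group, hsq]
      simp
    have h1 : cs.length (u * wI0) + cs.length u = cs.length wI0 :=
      cxLength_longest_mul cs hI huG hm0 hmax0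
    have h2 : cs.length (u * wI0 * w) = cs.length (u * wI0) + cs.length w :=
      cxLength_minRight_mul cs hI (mul_mem huG hm0) hw'
    have h3 := habs (u * wI0 * w)
    have h4 : cs.length (wI0 * w) = cs.length wI0 + cs.length w :=
      cxLength_minRight_mul cs hI hm0 hw'
    have h5 := habs (wI0 * w)
    have h6 : cs.length v = cs.length u := by
      have a1 := habs (v * w₀)
      have a2 := habs' v
      have a3 : u = w₀ * (v * w₀) := by rw [hu, mul_assoc]
      rw [a3]
      omega
    have heq : v * (w₀ * wI0) * w = w₀ * (u * wI0 * w) := by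
      rw [hveq, show (w₀ * u * w₀) * (w₀ * wI0) * w = w₀ * u * (w₀ * w₀) * wI0 * w by group,
        hsq]
      group
    have heq2 : w₀ * wI0 * w = w₀ * (wI0 * w) := by rw [mul_assoc]
    rw [heq, heq2, h6]
    omega
  refine ⟨main, ?_⟩
  intro w hw
  intro v hv
  have h := main v hv w hw
  have e : v * (w₀ * wI0) * w = v * (w₀ * wI0 * w) := mul_assoc v (w₀ * wI0) w
  rw [e] at h
  rw [h]
  exact Nat.le_add_left _ _
end
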